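/- arXiv:2111.09510 — 2 statements merged into one kernel-verified Lean document; each statement's English description precedes it below -/
import Mathlib

section
/- A permutation w ∈ S_n is descending if and only if it is separable; that is, w can be written as w = w_{J_k}⋯w_{J_1} for some increasing chain of subsets J_1 ⊂ J_2 ⊂ ⋯ ⊂ J_k of the set of simple transpositions {s_1,…,s_{n−1}} (where w_J denotes the longest element of the parabolic subgroup generated by J) if and only if w avoids the patterns 2413 and 3142. -/
namespace KLPaper

open Equiv

/-! ### Partitions and standard Young tableaux, represented as lists of rows -/

/-- `lam` is a partition of `n`: a weakly decreasing list of positive parts summing to `n`. -/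
def IsPartition (n : ℕ) (lam : List ℕ) : Prop :=
  lam.Pairwise (· ≥ ·) ∧ (∀ x ∈ lam, 0 < x) ∧ lam.sum = n

/-- The entry of a tableau in row `i`, column `j` (0-based); `0` if out of range. -/
def entryAt (T : List (List ℕ)) (i j : ℕ) : ℕ := (T.getD i []).getD j 0

/-- `T` is a standard Young tableau of shape `lam`: rows have the prescribed lengths,
rows and columns strictly increase, and the multiset of entries is `{1, …, n}`. -/
def IsSYT (lam : List ℕ) (T : List (List ℕ)) : Prop :=
  T.map List.length = lam ∧
  (∀ r ∈ T, r.Pairwise (· < ·)) ∧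
  (∀ i j : ℕ, i + 1 < T.length → j < (T.getD (i + 1) []).length →
    entryAt T i j < entryAt T (i + 1) j) ∧
  T.flatten.Perm (List.range' 1 lam.sum)

/-- The (0-based) index of the row of a tableau containing the value `v`. -/
def rowOf (T : List (List ℕ)) (v : ℕ) : ℕ := T.findIdx (fun r => r.contains v)

/-- The (0-based) index of the column of a tableau containing the value `v`. -/
def colOf (T : List (List ℕ)) (v : ℕ) : ℕ := (T.getD (rowOf T v) []).idxOf v

/-- `j` is a descent of `T` : the value `j+1` lies in a strictly lower row than `j`. -/
def Descent (T : List (List ℕ)) (j : ℕ) : Prop := rowOf T j < rowOf T (j + 1)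

/-- The number of removable boxes of `lam` occurring in the rows `0, …, upto - 1`. -/
def removableCount (lam : List ℕ) (upto : ℕ) : ℕ :=
  ((List.range upto).filter (fun i => decide (lam.getD (i + 1) 0 < lam.getD i 0))).length

/-- The total number of removable boxes of a partition. -/
def numRemovable (lam : List ℕ) : ℕ := removableCount lam lam.length

/-- The (1-based, numbered from the top) list of rows containing removable boxes. -/
def removableRows (lam : List ℕ) : List ℕ :=
  (List.range lam.length).filter (fun i => decide (lam.getD (i + 1) 0 < lam.getD i 0))

/-- The index of a standard Young tableau: the (1-based, counted from the top) number of the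
removable box containing the largest entry `n`. -/
def idx (T : List (List ℕ)) : ℕ :=
  removableCount (T.map List.length) (rowOf T T.flatten.length + 1)

/-- Delete the `i`-th (1-based) removable box from a partition. -/
def deleteRemovable (lam : List ℕ) (i : ℕ) : List ℕ :=
  let row := (removableRows lam).getD (i - 1) 0
  (lam.set row (lam.getD row 0 - 1)).filter (fun x => decide (0 < x))

/-- Delete the box containing the largest entry from a standard Young tableau. -/
def deleteMax (T : List (List ℕ)) : List (List ℕ) :=
  let i := rowOf T T.flatten.length
  (T.set i ((T.getD i []).dropLast)).filter (fun r => !r.isEmpty)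

/-! ### Promotion and (partial) evacuation -/

/-- Overwrite the entry of `T` in position `(i, j)` with `v`. -/
def setEntry (T : List (List ℕ)) (i j v : ℕ) : List (List ℕ) :=
  T.set i ((T.getD i []).set j v)

/-- Slide a hole at position `(i, j)` north-west to the corner `(0,0)`, at each step swapping
the hole with the larger of the entries above it and to its left. -/
def slideNW : ℕ → ℕ → ℕ → List (List ℕ) → List (List ℕ)
  | 0, _, _, T => T
  | fuel + 1, i, j, T =>
    if i = 0 ∧ j = 0 then T
    else if i = 0 then slideNW fuel i (j - 1) (setEntry T i j (entryAt T i (j - 1)))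
    else if j = 0 then slideNW fuel (i - 1) j (setEntry T i j (entryAt T (i - 1) j))
    else if entryAt T i (j - 1) < entryAt T (i - 1) j then
      slideNW fuel (i - 1) j (setEntry T i j (entryAt T (i - 1) j))
    else slideNW fuel i (j - 1) (setEntry T i j (entryAt T i (j - 1)))

/-- Jeu-de-taquin promotion of a standard Young tableau: remove the largest entry, slide the
hole to the north-west corner, increment every entry, and place `1` in the corner. -/
def promote (T : List (List ℕ)) : List (List ℕ) :=
  let n := T.flatten.length
  let i := rowOf T n
  let j := colOf T n
  let T' := slideNW (i + j) i j T
  setEntry (T'.map (fun r => r.map (· + 1))) 0 0 1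

/-- Slide a hole at `(i, j)` south-east, at each step swapping the hole with the smaller of
its right and lower neighbours among the entries `≤ m`; stops when no such neighbour exists,
returning the resulting filling and the final position of the hole. -/
def slideOut (m : ℕ) : ℕ → ℕ → ℕ → List (List ℕ) → List (List ℕ) × ℕ × ℕ
  | 0, i, j, T => (T, i, j)
  | fuel + 1, i, j, T =>
    let r := entryAt T i (j + 1)
    let d := entryAt T (i + 1) j
    let rOk := decide (1 ≤ r ∧ r ≤ m)
    let dOk := decide (1 ≤ d ∧ d ≤ m)
    if rOk && dOk then
      if r < d then slideOut m fuel i (j + 1) (setEntry T i j r)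
      else slideOut m fuel (i + 1) j (setEntry T i j d)
    else if rOk then slideOut m fuel i (j + 1) (setEntry T i j r)
    else if dOk then slideOut m fuel (i + 1) j (setEntry T i j d)
    else (T, i, j)

/-- Inverse promotion applied to the sub-standard-tableau consisting of the entries
`1, …, m` of `T` (the remaining entries are fixed): remove the entry `1`, slide the hole
south-east within the unfixed region, decrement the remaining unfixed entries and place `m`
in the final position of the hole. -/
def prInvOn (T : List (List ℕ)) (m : ℕ) : List (List ℕ) :=
  let res := slideOut m T.flatten.length 0 0 T
  setEntry (res.1.map (fun row => row.map (fun v => if 2 ≤ v ∧ v ≤ m then v - 1 else v)))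
    res.2.1 res.2.2 m

/-- The partial evacuation `ev_k`: starting with the `k` smallest entries unfixed, repeatedly
perform inverse promotion on the unfixed entries and fix the largest unfixed entry.
`evacOn T n` (where `n` is the number of boxes) is the Schützenberger involution. -/
def evacOn : List (List ℕ) → ℕ → List (List ℕ)
  | T, 0 => T
  | T, m + 1 => evacOn (prInvOn T (m + 1)) m

/-! ### RSK -/

/-- Schensted insertion of `x` into a row: returns the new row and the bumped entry. -/
def insertRow : List ℕ → ℕ → List ℕ × Option ℕ
  | [], x => ([x], none)
  | y :: ys, x =>
    if x < y then (x :: ys, some y)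
    else
      let p := insertRow ys x
      (y :: p.1, p.2)

/-- Schensted row insertion of `x` into a tableau. -/
def insertTab : List (List ℕ) → ℕ → List (List ℕ)
  | [], x => [[x]]
  | r :: rs, x =>
    let p := insertRow r x
    match p.2 with
    | none => p.1 :: rs
    | some y => p.1 :: insertTab rs y

/-- Add the label `k` to the recording tableau `Q` in the unique new box of `P'`. -/
def addBox (Q P' : List (List ℕ)) (k : ℕ) : List (List ℕ) :=
  match (List.range P'.length).find?
      (fun i => decide ((Q.getD i []).length < (P'.getD i []).length)) with
  | some i => if i < Q.length then Q.set i ((Q.getD i []) ++ [k]) else Q ++ [[k]]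
  | none => Q

/-- RSK insertion of a word, producing the pair (insertion tableau, recording tableau). -/
def RSKword : List ℕ → ℕ → List (List ℕ) × List (List ℕ) → List (List ℕ) × List (List ℕ)
  | [], _, PQ => PQ
  | x :: xs, k, PQ =>
    let P' := insertTab PQ.1 x
    RSKword xs (k + 1) (P', addBox PQ.2 P' k)

/-- The one-line notation (with values `1, …, n`) of a permutation of `Fin n`. -/
def oneLine (n : ℕ) (v : Perm (Fin n)) : List ℕ :=
  (List.finRange n).map (fun i => (v i : ℕ) + 1)

/-- The RSK correspondence `v ↝ (P, Q)` for permutations. -/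
def RSKmap (n : ℕ) (v : Perm (Fin n)) : List (List ℕ) × List (List ℕ) :=
  RSKword (oneLine n v) 1 ([], [])

/-! ### Coxeter length, Bruhat order, Kazhdan–Lusztig polynomials for `S_n` -/

/-- `s` is a simple transposition `(j, j+1)`. -/
def IsSimpleT {n : ℕ} (s : Perm (Fin n)) : Prop :=
  ∃ j : ℕ, ∃ h : j + 1 < n, s = Equiv.swap ⟨j, Nat.lt_of_succ_lt h⟩ ⟨j + 1, h⟩

/-- The Coxeter length of a permutation: the minimal length of a word in the
simple transpositions expressing it. -/
noncomputable def len {n : ℕ} (w : Perm (Fin n)) : ℕ :=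
  sInf {k | ∃ L : List (Perm (Fin n)), L.length = k ∧ (∀ s ∈ L, IsSimpleT s) ∧ L.prod = w}

/-- One step in the Bruhat order: multiply by a transposition, increasing the length. -/
def BruhatStep {n : ℕ} (x y : Perm (Fin n)) : Prop :=
  (∃ i j : Fin n, i ≠ j ∧ y = x * Equiv.swap i j) ∧ len x < len y

/-- The Bruhat order on `S_n`. -/
def BruhatLe {n : ℕ} : Perm (Fin n) → Perm (Fin n) → Prop :=
  Relation.ReflTransGen BruhatStep

/-- The strict Bruhat order on `S_n`. -/
def BruhatLt {n : ℕ} (x y : Perm (Fin n)) : Prop := BruhatLe x y ∧ x ≠ y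

theorem bruhatLe_len_le {n : ℕ} {x y : Perm (Fin n)} (h : BruhatLe x y) : len x ≤ len y := by
  induction h with
  | refl => exact le_rfl
  | tail _ h2 ih => exact ih.trans h2.2.le

theorem bruhatLt_len_lt {n : ℕ} {x y : Perm (Fin n)} (h : BruhatLt x y) : len x < len y := by
  rcases Relation.ReflTransGen.cases_head h.1 with rfl | ⟨c, hc, hcy⟩
  · exact absurd rfl h.2
  · exact lt_of_lt_of_le hc.2 (bruhatLe_len_le hcy)

open Classical in
/-- A choice of simple transposition `s` with `len (s * w) < len w`, if one exists. -/
noncomputable def descChoice {n : ℕ} (w : Perm (Fin n)) : Option (Perm (Fin n)) :=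
  if h : ∃ s : Perm (Fin n), IsSimpleT s ∧ len (s * w) < len w then some h.choose else none

theorem descChoice_spec {n : ℕ} {w s : Perm (Fin n)} (h : descChoice w = some s) :
    len (s * w) < len w := by
  unfold descChoice at h
  split at h
  · rename_i hex
    obtain rfl : hex.choose = s := Option.some.inj h
    exact hex.choose_spec.2
  · exact absurd h (by simp)

open Classical in
/-- The Kazhdan–Lusztig polynomials `P_{v,w}` of the symmetric group, defined through the
standard recursion: `P_{w,w} = 1`, `P_{v,w} = 0` unless `v ≤ w` in Bruhat order, and for a
simple reflection `s` with `sw < w`,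
`P_{v,w} = q^{1-c} P_{sv,sw} + q^c P_{v,sw} - ∑_{v ≤ z < sw, sz < z} μ(z,sw) q^{(ℓ(w)-ℓ(z))/2} P_{v,z}`
where `c = 1` if `sv < v` and `c = 0` otherwise, and `μ(z,w')` is the coefficient of
`q^{(ℓ(w')-ℓ(z)-1)/2}` in `P_{z,w'}` (zero unless `ℓ(w') - ℓ(z)` is odd). -/
noncomputable def KLpoly {n : ℕ} (v w : Perm (Fin n)) : Polynomial ℤ :=
  if v = w then 1
  else if ¬ BruhatLt v w then 0
  else
    match hd : descChoice w with
    | none => 0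
    | some s =>
      have hlt : len (s * w) < len w := descChoice_spec hd
      Polynomial.X ^ (if len (s * v) < len v then 0 else 1) * KLpoly (s * v) (s * w)
      + Polynomial.X ^ (if len (s * v) < len v then 1 else 0) * KLpoly v (s * w)
      - ∑ z ∈ (Finset.univ.filter (fun z : Perm (Fin n) =>
            BruhatLe v z ∧ BruhatLt z (s * w) ∧ len (s * z) < len z ∧
              (len (s * w) - len z) % 2 = 1)).attach,
          Polynomial.C ((KLpoly z.1 (s * w)).coeff ((len (s * w) - len z.1 - 1) / 2))
            * Polynomial.X ^ ((len w - len z.1) / 2) * KLpoly v z.1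
termination_by len w
decreasing_by
  · exact hlt
  · exact hlt
  · exact hlt
  · have hz := z.2
    simp only [Finset.mem_filter] at hz
    exact lt_trans (bruhatLt_len_lt hz.2.2.1) hlt

open Classical in
/-- The Kazhdan–Lusztig `μ`-coefficient for a pair of permutations: the coefficient of
`q^{(ℓ(w)-ℓ(v)-1)/2}` in `P_{v,w}` for `v < w`, extended symmetrically, and `0` if `v` and
`w` are Bruhat-incomparable (or `ℓ(w) - ℓ(v)` is even). -/
noncomputable def muBarP {n : ℕ} (v w : Perm (Fin n)) : ℤ :=
  if BruhatLt v w ∧ (len w - len v) % 2 = 1 then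
    (KLpoly v w).coeff ((len w - len v - 1) / 2)
  else if BruhatLt w v ∧ (len v - len w) % 2 = 1 then
    (KLpoly w v).coeff ((len v - len w - 1) / 2)
  else 0

/-! ### The row-superstandard recording tableau and `μ̄` for tableaux -/

/-- Auxiliary: fill rows consecutively starting from `start`. -/
def rowStdAux : List ℕ → ℕ → List (List ℕ)
  | [], _ => []
  | a :: rest, start => ((List.range a).map (start + ·)) :: rowStdAux rest (start + a)

/-- The row-superstandard tableau of a given shape: `1, 2, …` filled row by row. -/
def rowStd (lam : List ℕ) : List (List ℕ) := rowStdAux lam 1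

open Classical in
/-- The Kazhdan–Lusztig `μ̄`-coefficient for a pair of standard Young tableaux of the same
shape with `n` boxes: `μ̄(T,R) = μ̄(v,w)` where `v ↝ (T,Q)`, `w ↝ (R,Q)` under RSK for a
fixed recording tableau `Q` of that shape. -/
noncomputable def muBarTab (n : ℕ) (T R : List (List ℕ)) : ℤ :=
  if hT : ∃ v : Perm (Fin n), RSKmap n v = (T, rowStd (T.map List.length)) then
    if hR : ∃ w : Perm (Fin n), RSKmap n w = (R, rowStd (T.map List.length)) then
      muBarP hT.choose hR.choose
    else 0
  else 0

/-! ### The Specht module with its Kazhdan–Lusztig basis -/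

/-- The Kazhdan–Lusztig basis vector `C_T` of the Specht module, realised inside the space of
complex-valued functions on the standard Young tableaux of shape `lam`. -/
def KLvec {lam : List ℕ} (T : {T : List (List ℕ) // IsSYT lam T}) :
    {T : List (List ℕ) // IsSYT lam T} → ℂ :=
  fun R => if R = T then 1 else 0

open Classical in
/-- `ρ` is an action of `S_n` on the span of the tableaux of shape `lam` realising the
Kazhdan–Lusztig basis action on the Specht module `S^lam`:
`s_j · C_T = -C_T` if `j ∈ D(T)`, and
`s_j · C_T = C_T + ∑_{R, j ∈ D(R)} μ̄(T,R) C_R` otherwise. -/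
def KLActionHyp (n : ℕ) (lam : List ℕ)
    (ρ : Representation ℂ (Perm (Fin n)) ({T : List (List ℕ) // IsSYT lam T} → ℂ)) : Prop :=
  ∀ (j : ℕ) (h1 : 1 ≤ j) (h2 : j < n) (T : {T : List (List ℕ) // IsSYT lam T}),
    ρ (Equiv.swap ⟨j - 1, by omega⟩ ⟨j, h2⟩) (KLvec T) =
      if Descent T.1 j then -KLvec T
      else KLvec T + fun R => if Descent R.1 j then ((muBarTab n T.1 R.1 : ℤ) : ℂ) else 0

open Classical in
/-- Promotion as a map on the standard Young tableaux of shape `lam`. -/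
noncomputable def prT {lam : List ℕ} (T : {T : List (List ℕ) // IsSYT lam T}) :
    {T : List (List ℕ) // IsSYT lam T} :=
  if h : IsSYT lam (promote T.1) then ⟨promote T.1, h⟩ else T

open Classical in
/-- Partial evacuation `ev_k` as a map on the standard Young tableaux of shape `lam`. -/
noncomputable def evT {lam : List ℕ} (k : ℕ) (T : {T : List (List ℕ) // IsSYT lam T}) :
    {T : List (List ℕ) // IsSYT lam T} :=
  if h : IsSYT lam (evacOn T.1 k) then ⟨evacOn T.1 k, h⟩ else T

/-! ### Distinguished permutations -/

/-- The permutation of `Fin n` reversing the first `k` elements `0, …, k-1` (i.e. reversing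
the values `1, …, k` in one-line notation) and fixing the rest. -/
def revFirst (n k : ℕ) (hk : k ≤ n) : Perm (Fin n) :=
  Function.Involutive.toPerm
    (fun i => if h : (i : ℕ) < k then ⟨k - 1 - (i : ℕ), by omega⟩ else i)
    (by
      intro i
      by_cases h : (i : ℕ) < k
      · have h2 : k - 1 - (i : ℕ) < k := by omega
        simp only [h, dif_pos, h2]
        apply Fin.ext
        simp only []
        omega
      · simp [h])

/-- The embedding `S_{n-1} → S_n` (as the permutations fixing the last point). -/
noncomputable def permIncl (n : ℕ) : Perm (Fin (n - 1)) →* Perm (Fin n) :=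
  Equiv.Perm.viaEmbeddingHom (Fin.castLEEmb (Nat.sub_le n 1))

/-! ### Parabolic subgroups, descending and separable permutations -/

/-- The simple transposition `s_{j+1} = (j, j+1)` (0-based `j`). -/
def simpleOf (n j : ℕ) : Perm (Fin n) :=
  if h : j + 1 < n then Equiv.swap ⟨j, by omega⟩ ⟨j + 1, h⟩ else 1

/-- The parabolic (standard Young) subgroup of `S_n` generated by the simple transpositions
`s_{j+1}` for `j ∈ J` (0-based). -/
def parab (n : ℕ) (J : Finset ℕ) : Subgroup (Perm (Fin n)) :=
  Subgroup.closure {s | ∃ j ∈ J, s = simpleOf n j}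

/-- `u` is the longest element of the parabolic subgroup `S_J`. -/
noncomputable def IsLongestOf (n : ℕ) (J : Finset ℕ) (u : Perm (Fin n)) : Prop :=
  u ∈ parab n J ∧ ∀ v ∈ parab n J, len v ≤ len u

/-- A permutation is descending if it is of the form `w_{J_k} ⋯ w_{J_1}` for an increasing
chain `J_1 ⊂ ⋯ ⊂ J_k` of non-empty subsets of the simple transpositions, where `w_J` is the
longest element of the parabolic subgroup `S_J`. -/
noncomputable def Descending (n : ℕ) (w : Perm (Fin n)) : Prop :=
  ∃ (k : ℕ) (Js : Fin k → Finset ℕ) (ws : Fin k → Perm (Fin n)),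
    (∀ i, (Js i).Nonempty ∧ Js i ⊆ Finset.range (n - 1)) ∧
    (∀ i j : Fin k, i < j → Js i ⊂ Js j) ∧
    (∀ i, IsLongestOf n (Js i) (ws i)) ∧
    w = (List.ofFn ws).reverse.prod

/-- A permutation is separable if it avoids the patterns `2413` and `3142`. -/
def Separable (n : ℕ) (w : Perm (Fin n)) : Prop :=
  ¬ ∃ i1 i2 i3 i4 : Fin n, i1 < i2 ∧ i2 < i3 ∧ i3 < i4 ∧
    ((w i3 < w i1 ∧ w i1 < w i4 ∧ w i4 < w i2) ∨
     (w i2 < w i4 ∧ w i4 < w i1 ∧ w i1 < w i3))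

/-! ### Column-superstandard tableaux -/

/-- The number of boxes in column `c` of the shape `lam`. -/
def colHeight (lam : List ℕ) (c : ℕ) : ℕ := (lam.filter (fun x => decide (c < x))).length

/-- The column-superstandard tableau `CSS(lam)`: the values `1, …, n` are placed column by
column, left to right, each column top to bottom. -/
def colStd (lam : List ℕ) : List (List ℕ) :=
  (List.range lam.length).map (fun i =>
    (List.range (lam.getD i 0)).map (fun j =>
      ((List.range j).map (colHeight lam)).sum + i + 1))

/-- The column reading word of a tableau: columns left to right, each read bottom to top. -/
def colReading (T : List (List ℕ)) : List ℕ :=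
  ((List.range (T.getD 0 []).length).map (fun j =>
    (((List.range T.length).filter (fun i => decide (j < (T.getD i []).length))).reverse).map
      (fun i => entryAt T i j))).flatten

/-- The tableau `CSS_i(lam)`: `n` is placed in the `i`-th removable box (in row `k`,
1-based); the values `n-1, …, n-k+1` are placed at the ends of rows `k-1, …, 1`; the
remaining values `1, …, n-k` are placed in the remaining boxes column by column. -/
def cssI (lam : List ℕ) (i : ℕ) : List (List ℕ) :=
  let n := lam.sum
  let row0 := (removableRows lam).getD (i - 1) 0
  let lam' := (List.range lam.length).map
    (fun t => if t ≤ row0 then lam.getD t 0 - 1 else lam.getD t 0)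
  let base := colStd lam'
  (List.range lam.length).map (fun t =>
    if t ≤ row0 then (base.getD t []) ++ [n - (row0 - t)] else base.getD t [])


/-!
By `len = #inversions`, the parabolic subgroup `S_J` is the group of permutations preserving the
blocks of `J` (the maximal intervals `{x, …, y}` with `x, …, y - 1 ∈ J`), and its longest element
`w_J` reverses every block. In `w_J * v` with `v ∈ S_J`, a `2413` or `3142` is confined to one
block, on which `w_J` exchanges the two patterns; peeling off the largest set of the chain shows
that descending permutations are separable.

Conversely, if the minimum of a separable `w` precedes its maximum, `w` is a direct sum
`u ⊕ v` of smaller separable permutations (otherwise a `3142` appears), and the chains of `u` and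
`v` merge level by level into a chain for `w`. Otherwise `w₀ * w` is of that kind, and
multiplying by `w₀ = w_{range (n - 1)}` preserves both properties: it reverses the values, and it
adds or removes the top of the chain.
-/

open Finset

section Length

variable {n : ℕ}

def adjSwap (t : ℕ) (h : t + 1 < n) : Perm (Fin n) := swap ⟨t, by omega⟩ ⟨t + 1, h⟩

lemma adjSwap_apply_val {t : ℕ} (h : t + 1 < n) (x : Fin n) :
    (adjSwap t h x : ℕ) = if (x : ℕ) = t then t + 1 else if (x : ℕ) = t + 1 then t else x := by
  simp only [adjSwap, swap_apply_def, Fin.ext_iff]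
  split_ifs <;> simp_all

@[simp]
lemma adjSwap_mul_self {t : ℕ} (h : t + 1 < n) : adjSwap t h * adjSwap t h = 1 :=
  swap_mul_self _ _

lemma adjSwap_lt_adjSwap_iff {t : ℕ} (h : t + 1 < n) {x y : Fin n}
    (hxy : ¬((x : ℕ) = t ∧ (y : ℕ) = t + 1)) (hyx : ¬((x : ℕ) = t + 1 ∧ (y : ℕ) = t)) :
    adjSwap t h x < adjSwap t h y ↔ x < y := by
  rw [Fin.lt_def, Fin.lt_def, adjSwap_apply_val, adjSwap_apply_val]
  split_ifs <;> omega

def invSet (w : Perm (Fin n)) : Finset (Fin n × Fin n) :=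
  univ.filter fun p => p.1 < p.2 ∧ w p.2 < w p.1

def invNum (w : Perm (Fin n)) : ℕ := #(invSet w)

lemma invNum_one : invNum (1 : Perm (Fin n)) = 0 := by
  rw [invNum, card_eq_zero, invSet, filter_eq_empty_iff]
  exact fun p _ h => lt_asymm h.1 h.2

/-- Relabelling both entries of a pair by the swap preserves their order, except for the pair
`(t, t + 1)`. -/
lemma invNum_mul_adjSwap_of_lt {w : Perm (Fin n)} {t : ℕ} {h : t + 1 < n}
    (hw : w ⟨t, by omega⟩ < w ⟨t + 1, h⟩) : invNum (w * adjSwap t h) = invNum w + 1 := by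
  set s := adjSwap t h
  have key : ∀ x y : Fin n,
      (s x, s y) ∈ invSet (w * s) ↔ (x, y) ∈ insert (⟨t + 1, h⟩, ⟨t, by omega⟩) (invSet w) := by
    intro x y
    simp only [invSet, mem_filter, mem_univ, true_and, mem_insert, Perm.mul_apply, s,
      adjSwap, swap_apply_self, Prod.mk.injEq]
    by_cases hyx : (x : ℕ) = t + 1 ∧ (y : ℕ) = t
    · obtain ⟨rfl, rfl⟩ : x = ⟨t + 1, h⟩ ∧ y = ⟨t, Nat.lt_of_succ_lt h⟩ :=
        ⟨Fin.ext hyx.1, Fin.ext hyx.2⟩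
      simp [swap_apply_left, swap_apply_right, Fin.lt_def, hw]
    by_cases hxy : (x : ℕ) = t ∧ (y : ℕ) = t + 1
    · obtain ⟨rfl, rfl⟩ : x = ⟨t, Nat.lt_of_succ_lt h⟩ ∧ y = ⟨t + 1, h⟩ :=
        ⟨Fin.ext hxy.1, Fin.ext hxy.2⟩
      simp [swap_apply_left, swap_apply_right, Fin.lt_def, not_lt.2 hw.le]
    have := adjSwap_lt_adjSwap_iff h hxy hyx
    simp only [adjSwap] at this
    rw [this, Fin.ext_iff, Fin.ext_iff]
    tauto
  have hnot : (⟨t + 1, h⟩, ⟨t, by omega⟩) ∉ invSet w := by simp [invSet]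
  rw [invNum, invNum, ← card_insert_of_notMem hnot]
  refine (card_nbij' (fun p => (s p.1, s p.2)) (fun p => (s p.1, s p.2)) ?_ ?_ ?_ ?_).symm
  · exact fun p hp => (key p.1 p.2).2 hp
  · intro p hp
    simpa [s, adjSwap] using (key (s p.1) (s p.2)).1 (by simpa [s, adjSwap] using hp)
  all_goals intro p _; simp [s, adjSwap]

lemma invNum_mul_adjSwap_of_gt {w : Perm (Fin n)} {t : ℕ} {h : t + 1 < n}
    (hw : w ⟨t + 1, h⟩ < w ⟨t, by omega⟩) : invNum (w * adjSwap t h) + 1 = invNum w := by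
  have := invNum_mul_adjSwap_of_lt (w := w * adjSwap t h) (h := h)
    (by simpa [adjSwap, swap_apply_left, swap_apply_right] using hw)
  rwa [mul_assoc, adjSwap_mul_self, mul_one, eq_comm] at this

lemma invNum_mul_adjSwap_le (w : Perm (Fin n)) {t : ℕ} (h : t + 1 < n) :
    invNum (w * adjSwap t h) ≤ invNum w + 1 := by
  rcases lt_or_gt_of_ne (w.injective.ne (a₁ := ⟨t, by omega⟩) (a₂ := ⟨t + 1, h⟩)
    (by simp [Fin.ext_iff])) with hw | hw
  · exact (invNum_mul_adjSwap_of_lt hw).le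
  · have := invNum_mul_adjSwap_of_gt hw
    omega

lemma exists_descent {w : Perm (Fin n)} (hw : w ≠ 1) :
    ∃ (t : ℕ) (h : t + 1 < n), w ⟨t + 1, h⟩ < w ⟨t, by omega⟩ := by
  by_contra! hasc
  refine hw (Perm.ext fun i => congrFun (StrictMono.eq_id ?_) i)
  cases n with
  | zero => exact fun i => i.elim0
  | succ m =>
    refine Fin.strictMono_iff_lt_succ.2 fun i => lt_of_le_of_ne (hasc i (by omega)) ?_
    exact w.injective.ne (Fin.castSucc_lt_succ (i := i)).ne

theorem induction_on_descent {P : Perm (Fin n) → Prop} (one : P 1)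
    (step : ∀ w (t : ℕ) (h : t + 1 < n), w ⟨t + 1, h⟩ < w ⟨t, by omega⟩ →
      P (w * adjSwap t h) → P w) (w : Perm (Fin n)) : P w := by
  induction hk : invNum w using Nat.strong_induction_on generalizing w with
  | _ k ih =>
    obtain rfl | hw := eq_or_ne w 1
    · exact one
    obtain ⟨t, h, hd⟩ := exists_descent hw
    have := invNum_mul_adjSwap_of_gt hd
    exact step w t h hd (ih _ (by omega) _ rfl)

lemma exists_word_length_eq_invNum (w : Perm (Fin n)) :
    ∃ L : List (Perm (Fin n)), L.length = invNum w ∧ (∀ s ∈ L, IsSimpleT s) ∧ L.prod = w := by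
  induction w using induction_on_descent with
  | one => exact ⟨[], invNum_one.symm, by simp, rfl⟩
  | step w t h hd ih =>
    obtain ⟨L, hlen, hsimple, hprod⟩ := ih
    refine ⟨L ++ [adjSwap t h], ?_, ?_, ?_⟩
    · have := invNum_mul_adjSwap_of_gt hd
      simp only [List.length_append, List.length_singleton]
      omega
    · simpa using fun s hs => hs.elim (hsimple s) fun hs => ⟨t, h, hs⟩
    · rw [List.prod_append, hprod, List.prod_singleton, mul_assoc, adjSwap_mul_self, mul_one]

lemma invNum_prod_le_length {L : List (Perm (Fin n))} (hL : ∀ s ∈ L, IsSimpleT s) :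
    invNum L.prod ≤ L.length := by
  induction L using List.reverseRecOn with
  | nil => simp [invNum_one]
  | append_singleton L s ih =>
    obtain ⟨t, h, rfl⟩ := hL s (by simp)
    have := ih fun x hx => hL x (by simp [hx])
    simp only [List.prod_append, List.prod_singleton, List.length_append,
      List.length_singleton]
    exact (invNum_mul_adjSwap_le L.prod h).trans (by omega)

theorem len_eq_invNum (w : Perm (Fin n)) : len w = invNum w := by
  obtain ⟨L, hlen, hsimple, hprod⟩ := exists_word_length_eq_invNum w
  refine le_antisymm (Nat.sInf_le ⟨L, hlen, hsimple, hprod⟩)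
    (le_csInf ⟨_, L, hlen, hsimple, hprod⟩ ?_)
  rintro k ⟨M, rfl, hM, rfl⟩
  exact invNum_prod_le_length hM

end Length

section Blocks

/-- As in `simpleOf`, `t ∈ J` stands for `s_{t+1} = (t, t + 1)` on `Fin n`. -/
def SameBlock (J : Finset ℕ) (x y : ℕ) : Prop := ∀ t, min x y ≤ t → t < max x y → t ∈ J

variable {J : Finset ℕ}

namespace SameBlock

lemma refl (x : ℕ) : SameBlock J x x := fun t h1 h2 => by omega

lemma symm {x y : ℕ} (h : SameBlock J x y) : SameBlock J y x :=
  fun t h1 h2 => h t (by omega) (by omega)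

lemma trans {x y z : ℕ} (h₁ : SameBlock J x y) (h₂ : SameBlock J y z) : SameBlock J x z := by
  intro t h1 h2
  by_cases ht : min x y ≤ t ∧ t < max x y
  · exact h₁ t ht.1 ht.2
  · exact h₂ t (by omega) (by omega)

lemma of_le_of_le {x y z : ℕ} (h : SameBlock J x z) (hxy : x ≤ y) (hyz : y ≤ z) :
    SameBlock J x y :=
  fun t h1 h2 => h t (by omega) (by omega)

end SameBlock

lemma sameBlock_succ_iff {t : ℕ} : SameBlock J t (t + 1) ↔ t ∈ J :=
  ⟨fun h => h t (by omega) (by omega), fun h s h1 h2 => by rwa [show s = t by omega]⟩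

variable {n : ℕ}

def blockPerm (n : ℕ) (J : Finset ℕ) : Subgroup (Perm (Fin n)) where
  carrier := {w | ∀ i : Fin n, SameBlock J i (w i)}
  one_mem' _ := SameBlock.refl _
  mul_mem' ha hb i := (hb i).trans (ha _)
  inv_mem' {a} ha i := by simpa using (ha (a⁻¹ i)).symm

lemma mem_blockPerm {w : Perm (Fin n)} : w ∈ blockPerm n J ↔ ∀ i : Fin n, SameBlock J i (w i) :=
  Iff.rfl

lemma blockPerm_mono {K : Finset ℕ} (h : K ⊆ J) : blockPerm n K ≤ blockPerm n J :=
  fun _ hw i t h1 h2 => h (mem_blockPerm.1 hw i t h1 h2)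

lemma sameBlock_of_apply_lt {w : Perm (Fin n)} (hw : w ∈ blockPerm n J) {i j : Fin n}
    (hij : i < j) (hji : w j < w i) : SameBlock J i j := by
  rw [mem_blockPerm] at hw
  intro t h1 h2
  by_contra ht
  have hi : (w i : ℕ) ≤ t := by
    by_contra h; exact ht (hw i t (by omega) (by rw [Fin.lt_def] at hij; omega))
  have hj : t < (w j : ℕ) := by
    by_contra h; exact ht (hw j t (by omega) (by rw [Fin.lt_def] at hij; omega))
  rw [Fin.lt_def] at hij hji
  omega

lemma lt_of_not_sameBlock {w : Perm (Fin n)} (hw : w ∈ blockPerm n J) {i j : Fin n}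
    (hij : i < j) (hs : ¬SameBlock J i j) : w i < w j :=
  lt_of_le_of_ne (not_lt.1 fun h => hs (sameBlock_of_apply_lt hw hij h)) (w.injective.ne hij.ne)

lemma adjSwap_mem_blockPerm {t : ℕ} (h : t + 1 < n) (ht : t ∈ J) :
    adjSwap t h ∈ blockPerm n J := by
  refine mem_blockPerm.2 fun i s h1 h2 => ?_
  have := adjSwap_apply_val h i
  split_ifs at this <;> rwa [show s = t by omega]

lemma simpleOf_eq_adjSwap {t : ℕ} (h : t + 1 < n) : simpleOf n t = adjSwap t h := dif_pos h

theorem parab_eq_blockPerm : parab n J = blockPerm n J := by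
  refine le_antisymm ((Subgroup.closure_le _).2 ?_) fun w => ?_
  · rintro _ ⟨t, ht, rfl⟩
    by_cases h : t + 1 < n
    · rw [SetLike.mem_coe, simpleOf_eq_adjSwap h]
      exact adjSwap_mem_blockPerm h ht
    · simp [simpleOf, h]
  induction w using induction_on_descent with
  | one => exact fun _ => Subgroup.one_mem _
  | step w t h hd ih =>
    intro hw
    have ht : t ∈ J := sameBlock_succ_iff.1
      (sameBlock_of_apply_lt hw (Fin.mk_lt_mk.2 (Nat.lt_succ_self t)) hd)
    have hs : adjSwap t h ∈ parab n J := by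
      rw [← simpleOf_eq_adjSwap h]; exact Subgroup.subset_closure ⟨t, ht, rfl⟩
    simpa [mul_assoc] using Subgroup.mul_mem _
      (ih (Subgroup.mul_mem _ hw (adjSwap_mem_blockPerm h ht))) hs

/-- The paper's `w_J`, see `isLongestOf_iff_isBlockReversal`. -/
def IsBlockReversal (J : Finset ℕ) (r : Perm (Fin n)) : Prop :=
  r ∈ blockPerm n J ∧ ∀ ⦃i j : Fin n⦄, i < j → SameBlock J i j → r j < r i

lemma isBlockReversal_of_descents {r : Perm (Fin n)} (hr : r ∈ blockPerm n J)
    (hd : ∀ (t : ℕ) (h : t + 1 < n), t ∈ J → r ⟨t + 1, h⟩ < r ⟨t, by omega⟩) :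
    IsBlockReversal J r := by
  refine ⟨hr, fun i j hij hs => ?_⟩
  rw [Fin.lt_def] at hij
  suffices ∀ k (hk : k < n), (i : ℕ) < k → k ≤ j → r ⟨k, hk⟩ < r i from this j j.2 hij le_rfl
  intro k hk hik hkj
  induction k, hik using Nat.le_induction with
  | base => exact hd i hk (hs i (by omega) (by omega))
  | succ k hik ih =>
    exact (hd k hk (hs k (by omega) (by omega))).trans (ih (by omega) (by omega))

end Blocks

section Longest

variable {n : ℕ} {J : Finset ℕ}

lemma IsBlockReversal.invSet_subset {r w : Perm (Fin n)} (hr : IsBlockReversal J r)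
    (hw : w ∈ blockPerm n J) : invSet w ⊆ invSet r := by
  intro p hp
  simp only [invSet, mem_filter, mem_univ, true_and] at hp ⊢
  exact ⟨hp.1, hr.2 hp.1 (sameBlock_of_apply_lt hw hp.1 hp.2)⟩

theorem isLongestOf_iff_isBlockReversal {u : Perm (Fin n)} :
    IsLongestOf n J u ↔ IsBlockReversal J u := by
  rw [IsLongestOf, parab_eq_blockPerm]
  constructor
  · rintro ⟨hu, hmax⟩
    refine isBlockReversal_of_descents hu fun t h ht => ?_
    by_contra! hasc
    have hlt := lt_of_le_of_ne hasc (u.injective.ne (by simp [Fin.ext_iff]))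
    have := hmax _ (Subgroup.mul_mem _ hu (adjSwap_mem_blockPerm h ht))
    rw [len_eq_invNum, len_eq_invNum, invNum_mul_adjSwap_of_lt hlt] at this
    omega
  · intro hu
    refine ⟨hu.1, fun v hv => ?_⟩
    rw [len_eq_invNum, len_eq_invNum]
    exact card_le_card (hu.invSet_subset hv)

lemma exists_isBlockReversal (n : ℕ) (J : Finset ℕ) : ∃ r : Perm (Fin n), IsBlockReversal J r := by
  classical
  obtain ⟨u, hu, hmax⟩ := (univ.filter (· ∈ parab n J)).exists_max_image len
    ⟨1, by simp⟩
  exact ⟨u, isLongestOf_iff_isBlockReversal.1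
    ⟨(mem_filter.1 hu).2, fun v hv => hmax v (by simpa using hv)⟩⟩

lemma IsBlockReversal.inv_apply_lt {r : Perm (Fin n)} (hr : IsBlockReversal J r) {x y : Fin n}
    (hxy : x < y) (hs : SameBlock J x y) : r⁻¹ y < r⁻¹ x := by
  have hinv := mem_blockPerm.1 (inv_mem hr.1)
  refine lt_of_not_ge fun h => ?_
  have := hr.2 (lt_of_le_of_ne h (r⁻¹.injective.ne hxy.ne))
    (((hinv x).symm.trans hs).trans (hinv y))
  simp only [Perm.coe_inv, apply_symm_apply] at this
  exact lt_asymm hxy this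

/-- Two block reversals differ by a block-preserving permutation that is increasing on every
block, hence increasing. -/
theorem IsBlockReversal.unique {r r' : Perm (Fin n)} (hr : IsBlockReversal J r)
    (hr' : IsBlockReversal J r') : r = r' := by
  have hmono : StrictMono (r⁻¹ * r' : Perm (Fin n)) := by
    intro i j hij
    by_cases hs : SameBlock J i j
    · have hb := mem_blockPerm.1 hr'.1
      exact hr.inv_apply_lt (hr'.2 hij hs) (((hb j).symm.trans hs.symm).trans (hb i))
    · exact lt_of_not_sameBlock (mul_mem (inv_mem hr.1) hr'.1) hij hs
  exact inv_mul_eq_one.1 (Perm.ext fun i => congrFun hmono.eq_id i)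

noncomputable def longestOf (n : ℕ) (J : Finset ℕ) : Perm (Fin n) :=
  (exists_isBlockReversal n J).choose

lemma isBlockReversal_longestOf : IsBlockReversal J (longestOf n J) :=
  (exists_isBlockReversal n J).choose_spec

lemma IsBlockReversal.eq_longestOf {r : Perm (Fin n)} (hr : IsBlockReversal J r) :
    r = longestOf n J :=
  hr.unique isBlockReversal_longestOf

lemma isLongestOf_iff_eq_longestOf {u : Perm (Fin n)} : IsLongestOf n J u ↔ u = longestOf n J :=
  isLongestOf_iff_isBlockReversal.trans
    ⟨IsBlockReversal.eq_longestOf, fun h => h ▸ isBlockReversal_longestOf⟩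

@[simp]
lemma longestOf_empty : longestOf n ∅ = 1 :=
  (IsBlockReversal.eq_longestOf ⟨one_mem _, fun i _ hij hs => absurd
    (hs i (by omega) (by rw [Fin.lt_def] at hij; omega)) (notMem_empty _)⟩).symm

lemma longestOf_range : longestOf n (range (n - 1)) = Fin.revPerm := by
  refine (IsBlockReversal.eq_longestOf
    ⟨mem_blockPerm.2 fun i t h1 h2 => ?_, fun i j hij _ => ?_⟩).symm
  · have := (Fin.revPerm i).2
    have := i.2
    rw [mem_range]
    omega
  · simpa using Fin.rev_lt_rev.2 hij

end Longest

section Patterns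

variable {α β : Type*} [LinearOrder α] [LinearOrder β]

def Is2413Or3142 (a b c d : α) : Prop := (c < a ∧ a < d ∧ d < b) ∨ (b < d ∧ d < a ∧ a < c)

lemma StrictMono.is2413Or3142_iff {f : α → β} (hf : StrictMono f) {a b c d : α} :
    Is2413Or3142 (f a) (f b) (f c) (f d) ↔ Is2413Or3142 a b c d := by
  simp only [Is2413Or3142, hf.lt_iff_lt]

/-- Reversing the order of the values exchanges `2413` and `3142`. -/
lemma StrictAntiOn.is2413Or3142_iff {f : α → β} {s : Set α} (hf : StrictAntiOn f s) {a b c d : α}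
    (ha : a ∈ s) (hb : b ∈ s) (hc : c ∈ s) (hd : d ∈ s) :
    Is2413Or3142 (f a) (f b) (f c) (f d) ↔ Is2413Or3142 a b c d := by
  simp only [Is2413Or3142, hf.lt_iff_gt, ha, hb, hc, hd]
  tauto

end Patterns

section Forward

variable {n : ℕ} {J : Finset ℕ}

lemma separable_one : Separable n 1 := by
  rintro ⟨i₁, i₂, i₃, i₄, h₁₂, h₂₃, h₃₄, hpat⟩
  simp only [Perm.one_apply] at hpat
  rcases hpat with h | h <;> order

/-- A pattern of `r * w` is confined to one block, where `r` reverses the order of the values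
of `w`. -/
theorem Separable.blockReversal_mul {r w : Perm (Fin n)} (hr : IsBlockReversal J r)
    (hw : w ∈ blockPerm n J) (hsep : Separable n w) : Separable n (r * w) := by
  rintro ⟨i₁, i₂, i₃, i₄, h₁₂, h₂₃, h₃₄, hpat⟩
  have hrw : r * w ∈ blockPerm n J := mul_mem hr.1 hw
  have h₁₄ : SameBlock J i₁ i₄ := by
    rcases hpat with ⟨h₃₁, -, h₄₂⟩ | ⟨-, h₄₁, -⟩
    · exact ((sameBlock_of_apply_lt hrw (h₁₂.trans h₂₃) h₃₁).of_le_of_le h₁₂.le h₂₃.le).trans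
        (sameBlock_of_apply_lt hrw (h₂₃.trans h₃₄) h₄₂)
    · exact sameBlock_of_apply_lt hrw (h₁₂.trans (h₂₃.trans h₃₄)) h₄₁
  let B : Set (Fin n) := {x | SameBlock J i₁ x}
  have hB : ∀ i, i₁ ≤ i → i ≤ i₄ → w i ∈ B := fun i h₁ h₂ =>
    (h₁₄.of_le_of_le h₁ h₂).trans (mem_blockPerm.1 hw i)
  have hanti : StrictAntiOn r B := fun x hx y hy hxy => hr.2 hxy (hx.symm.trans hy)
  refine hsep ⟨i₁, i₂, i₃, i₄, h₁₂, h₂₃, h₃₄,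
    (StrictAntiOn.is2413Or3142_iff hanti ?_ ?_ ?_ ?_).1 hpat⟩
  · exact hB i₁ le_rfl (h₁₂.trans (h₂₃.trans h₃₄)).le
  · exact hB i₂ h₁₂.le (h₂₃.trans h₃₄).le
  · exact hB i₃ (h₁₂.trans h₂₃).le h₃₄.le
  · exact hB i₄ (h₁₂.trans (h₂₃.trans h₃₄)).le le_rfl

end Forward

section Chains

variable {n : ℕ}

/-- The chain `J_1 ⊂ ⋯ ⊂ J_k` of the paper, listed from the top: `c m = J_{k-m}` for `m < k`,
padded with `∅`. -/
def IsStrictChain (n k : ℕ) (c : ℕ → Finset ℕ) : Prop :=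
  (∀ m < k, c (m + 1) ⊂ c m) ∧ (∀ m, k ≤ m → c m = ∅) ∧ ∀ m, c m ⊆ range (n - 1)

noncomputable def chainProd (n k : ℕ) (c : ℕ → Finset ℕ) : Perm (Fin n) :=
  ((List.range k).map fun m => longestOf n (c m)).prod

lemma chainProd_succ (k : ℕ) (c : ℕ → Finset ℕ) :
    chainProd n (k + 1) c = longestOf n (c 0) * chainProd n k fun m => c (m + 1) := by
  simp [chainProd, List.range_succ_eq_map, List.map_map, Function.comp_def]

lemma chainProd_of_le {k k' : ℕ} {c : ℕ → Finset ℕ} (hk : k ≤ k') (hc : ∀ m, k ≤ m → c m = ∅) :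
    chainProd n k' c = chainProd n k c := by
  induction k', hk using Nat.le_induction with
  | base => rfl
  | succ k' hk ih =>
    rw [← ih, chainProd, List.range_succ, List.map_append, List.prod_append]
    simp [chainProd, hc k' hk]

namespace IsStrictChain

variable {k : ℕ} {c : ℕ → Finset ℕ}

lemma succ_subset (hc : IsStrictChain n k c) (m : ℕ) : c (m + 1) ⊆ c m := by
  by_cases hm : m < k
  · exact (hc.1 m hm).subset
  · simp [hc.2.1 (m + 1) (by omega)]

lemma ssubset_of_lt (hc : IsStrictChain n k c) {m m' : ℕ} (hm : m < m') (hmk : m < k) :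
    c m' ⊂ c m := by
  induction m', hm using Nat.le_induction with
  | base => exact hc.1 m hmk
  | succ m' _ ih => exact (hc.succ_subset m').trans_ssubset ih

end IsStrictChain

lemma reverse_ofFn_sub (k : ℕ) (f : ℕ → Perm (Fin n)) :
    (List.ofFn fun i : Fin k => f (k - 1 - i)).reverse = (List.range k).map f := by
  refine List.ext_getElem (by simp) fun i h₁ h₂ => ?_
  simp only [List.getElem_reverse, List.getElem_ofFn, List.getElem_map, List.getElem_range,
    List.length_ofFn]
  congr 1
  simp only [List.length_reverse, List.length_ofFn] at h₁
  omega

theorem descending_iff_exists_chain {w : Perm (Fin n)} :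
    Descending n w ↔ ∃ k c, IsStrictChain n k c ∧ w = chainProd n k c := by
  constructor
  · rintro ⟨k, Js, ws, hJs, hchain, hlong, rfl⟩
    let c : ℕ → Finset ℕ := fun m => if h : m < k then Js ⟨k - 1 - m, by omega⟩ else ∅
    refine ⟨k, c, ⟨fun m hm => ?_, fun m hm => dif_neg (by omega), fun m => ?_⟩, ?_⟩
    · by_cases hm' : m + 1 < k
      · simp only [c, dif_pos hm, dif_pos hm']
        exact hchain _ _ (by rw [Fin.lt_def]; dsimp only; omega)
      · simp only [c, dif_pos hm, dif_neg hm']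
        exact (hJs _).1.empty_ssubset
    · unfold c
      split_ifs
      exacts [(hJs _).2, empty_subset _]
    · rw [chainProd, ← reverse_ofFn_sub]
      congr 2
      refine congrArg List.ofFn (funext fun i => ?_)
      rw [isLongestOf_iff_eq_longestOf.1 (hlong i)]
      simp only [c, dif_pos (show k - 1 - (i : ℕ) < k by omega)]
      congr 2
      ext
      dsimp only
      omega
  · rintro ⟨k, c, hc, rfl⟩
    refine ⟨k, fun i => c (k - 1 - i), fun i => longestOf n (c (k - 1 - i)),
      fun i => ⟨?_, hc.2.2 _⟩,
      fun i j hij => hc.ssubset_of_lt (by rw [Fin.lt_def] at hij; omega) (by omega),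
      fun i => isLongestOf_iff_eq_longestOf.2 rfl, by rw [chainProd, ← reverse_ofFn_sub]⟩
    obtain ⟨x, hx, -⟩ := exists_of_ssubset (hc.1 (k - 1 - i) (by omega))
    exact ⟨x, hx⟩

theorem separable_chainProd {k : ℕ} {c : ℕ → Finset ℕ} (hc : ∀ m, c (m + 1) ⊆ c m) :
    Separable n (chainProd n k c) := by
  induction k generalizing c with
  | zero => exact separable_one
  | succ k ih =>
    rw [chainProd_succ]
    refine (ih fun m => hc (m + 1)).blockReversal_mul isBlockReversal_longestOf
      (Subgroup.list_prod_mem _ ?_)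
    simp only [List.mem_map, List.mem_range]
    rintro _ ⟨m, -, rfl⟩
    exact blockPerm_mono (antitone_nat_of_succ_le hc (Nat.zero_le _))
      isBlockReversal_longestOf.1

theorem separable_of_descending {w : Perm (Fin n)} (h : Descending n w) : Separable n w := by
  obtain ⟨k, c, hc, rfl⟩ := descending_iff_exists_chain.1 h
  exact separable_chainProd hc.succ_subset

end Chains

section DirectSum

variable {a b : ℕ}

def sumPerm (a b : ℕ) : Perm (Fin a) × Perm (Fin b) →* Perm (Fin (a + b)) :=
  finSumFinEquiv.permCongrHom.toMonoidHom.comp (Perm.sumCongrHom _ _)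

@[simp]
lemma sumPerm_apply_castAdd (u : Perm (Fin a)) (v : Perm (Fin b)) (i : Fin a) :
    sumPerm a b (u, v) (Fin.castAdd b i) = Fin.castAdd b (u i) := by
  simp [sumPerm]

@[simp]
lemma sumPerm_apply_natAdd (u : Perm (Fin a)) (v : Perm (Fin b)) (i : Fin b) :
    sumPerm a b (u, v) (Fin.natAdd a i) = Fin.natAdd a (v i) := by
  simp [sumPerm]

lemma exists_sumPerm_eq {w : Perm (Fin (a + b))}
    (hw : ∀ i : Fin (a + b), (i : ℕ) < a ↔ (w i : ℕ) < a) :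
    ∃ u v, w = sumPerm a b (u, v) := by
  set σ := finSumFinEquiv.permCongrHom.symm w
  have hσ : Set.MapsTo σ (Set.range Sum.inl) (Set.range Sum.inl) := by
    rintro _ ⟨i, rfl⟩
    have hi := (hw (Fin.castAdd b i)).1 (by simp)
    refine ⟨⟨_, hi⟩, ?_⟩
    simp only [σ, permCongrHom_symm]
    show _ = finSumFinEquiv.symm (w (finSumFinEquiv (Sum.inl i)))
    rw [finSumFinEquiv_apply_left, eq_comm, Equiv.symm_apply_eq, finSumFinEquiv_apply_left]
    exact Fin.ext rfl
  obtain ⟨⟨u, v⟩, huv⟩ := Perm.mem_sumCongrHom_range_of_perm_mapsTo_inl hσ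
  exact ⟨u, v, by rw [sumPerm, MonoidHom.comp_apply, huv]; ext; simp [σ]⟩

variable {A B : Finset ℕ}

lemma sameBlock_union_image_iff_of_lt {x y : ℕ} (hx : x < a) (hy : y < a) :
    SameBlock (A ∪ B.image (· + a)) x y ↔ SameBlock A x y := by
  refine ⟨fun h t h₁ h₂ => ?_, fun h t h₁ h₂ => mem_union_left _ (h t h₁ h₂)⟩
  have ht := h t h₁ h₂
  rw [mem_union, mem_image] at ht
  obtain ht | ⟨s, -, rfl⟩ := ht
  · exact ht
  · omega

lemma sameBlock_union_image_add_iff (hA : A ⊆ range (a - 1)) {x y : ℕ} :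
    SameBlock (A ∪ B.image (· + a)) (a + x) (a + y) ↔ SameBlock B x y := by
  constructor
  · intro h t h₁ h₂
    have ht := h (a + t) (by omega) (by omega)
    rw [mem_union, mem_image] at ht
    obtain ht | ⟨s, hs, hsa⟩ := ht
    · have := mem_range.1 (hA ht)
      omega
    · rwa [show t = s by omega]
  · intro h t h₁ h₂
    exact mem_union_right _ (mem_image.2 ⟨t - a, h _ (by omega) (by omega), by omega⟩)

lemma not_sameBlock_union_image (hA : A ⊆ range (a - 1)) {x y : ℕ} (hx : x < a) (hy : a ≤ y) :
    ¬SameBlock (A ∪ B.image (· + a)) x y := fun h => by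
  have ht := h (a - 1) (by omega) (by omega)
  rw [mem_union, mem_image] at ht
  obtain ht | ⟨s, -, hs⟩ := ht
  · have := mem_range.1 (hA ht)
    omega
  · omega

theorem IsBlockReversal.sumPerm {u : Perm (Fin a)} {v : Perm (Fin b)} (hA : A ⊆ range (a - 1))
    (hu : IsBlockReversal A u) (hv : IsBlockReversal B v) :
    IsBlockReversal (A ∪ B.image (· + a)) (sumPerm a b (u, v)) := by
  refine ⟨mem_blockPerm.2 fun i => ?_, fun i j hij hs => ?_⟩
  · induction i using Fin.addCases with
    | left i =>
      simpa using (sameBlock_union_image_iff_of_lt i.2 (u i).2).2 (mem_blockPerm.1 hu.1 i)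
    | right j => simpa using (sameBlock_union_image_add_iff hA).2 (mem_blockPerm.1 hv.1 j)
  induction i using Fin.addCases with
  | left i =>
    induction j using Fin.addCases with
    | left j =>
      simp only [Fin.val_castAdd] at hs
      have hij := (Fin.strictMono_castAdd b).lt_iff_lt.1 hij
      rw [sumPerm_apply_castAdd, sumPerm_apply_castAdd]
      exact Fin.strictMono_castAdd b (hu.2 hij ((sameBlock_union_image_iff_of_lt i.2 j.2).1 hs))
    | right j => exact absurd hs (not_sameBlock_union_image hA (by simp) (by simp))
  | right i =>
    induction j using Fin.addCases with
    | left j =>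
      rw [Fin.lt_def] at hij
      simp only [Fin.val_natAdd, Fin.val_castAdd] at hij
      omega
    | right j =>
      simp only [Fin.val_natAdd] at hs
      have hij := (Fin.strictMono_natAdd a).lt_iff_lt.1 hij
      rw [sumPerm_apply_natAdd, sumPerm_apply_natAdd]
      exact Fin.strictMono_natAdd a (hv.2 hij ((sameBlock_union_image_add_iff hA).1 hs))

lemma longestOf_union_image (hA : A ⊆ range (a - 1)) :
    longestOf (a + b) (A ∪ B.image (· + a)) = sumPerm a b (longestOf a A, longestOf b B) :=
  (isBlockReversal_longestOf.sumPerm hA isBlockReversal_longestOf).eq_longestOf.symm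

lemma union_image_ssubset {K K' M M' : Finset ℕ} (hK : K ⊆ range (a - 1)) (hK' : K' ⊆ K)
    (hM' : M' ⊆ M) (h : K' ⊂ K ∨ M' ⊂ M) :
    K' ∪ M'.image (· + a) ⊂ K ∪ M.image (· + a) := by
  refine (ssubset_iff_of_subset (union_subset_union hK' (image_subset_image hM'))).2 ?_
  rcases h with h | h
  · obtain ⟨x, hx, hx'⟩ := exists_of_ssubset h
    have := mem_range.1 (hK hx)
    refine ⟨x, mem_union_left _ hx, ?_⟩
    simp only [mem_union, hx', mem_image, false_or, not_exists, not_and]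
    omega
  · obtain ⟨x, hx, hx'⟩ := exists_of_ssubset h
    refine ⟨x + a, mem_union_right _ (mem_image_of_mem _ hx), ?_⟩
    simp only [mem_union, mem_image, add_left_inj, exists_eq_right, hx', or_false]
    intro hxK'
    have := mem_range.1 (hK (hK' hxK'))
    omega

theorem IsStrictChain.union_image {ku kv : ℕ} {cu cv : ℕ → Finset ℕ} (hu : IsStrictChain a ku cu)
    (hv : IsStrictChain b kv cv) :
    IsStrictChain (a + b) (max ku kv) fun m => cu m ∪ (cv m).image (· + a) := by
  refine ⟨fun m hm => union_image_ssubset (hu.2.2 m) (hu.succ_subset m) (hv.succ_subset m) ?_,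
    fun m hm => by simp [hu.2.1 m (by omega), hv.2.1 m (by omega)], fun m t ht => ?_⟩
  · by_cases h : m < ku
    exacts [Or.inl (hu.1 m h), Or.inr (hv.1 m (by omega))]
  rw [mem_range]
  rw [mem_union, mem_image] at ht
  obtain ht | ⟨s, hs, rfl⟩ := ht
  · have := mem_range.1 (hu.2.2 m ht)
    omega
  · have := mem_range.1 (hv.2.2 m hs)
    omega

lemma prod_range_map_sumPerm (K : ℕ) (f : ℕ → Perm (Fin a)) (g : ℕ → Perm (Fin b)) :
    ((List.range K).map fun m => sumPerm a b (f m, g m)).prod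
      = sumPerm a b (((List.range K).map f).prod, ((List.range K).map g).prod) := by
  induction K with
  | zero => exact (map_one _).symm
  | succ K ih => simp [List.range_succ, ih, ← map_mul]

theorem Descending.sumPerm {u : Perm (Fin a)} {v : Perm (Fin b)} (hu : Descending a u)
    (hv : Descending b v) : Descending (a + b) (sumPerm a b (u, v)) := by
  obtain ⟨ku, cu, hcu, rfl⟩ := descending_iff_exists_chain.1 hu
  obtain ⟨kv, cv, hcv, rfl⟩ := descending_iff_exists_chain.1 hv
  refine descending_iff_exists_chain.2 ⟨_, _, hcu.union_image hcv, ?_⟩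
  rw [← chainProd_of_le (le_max_left ku kv) hcu.2.1, ← chainProd_of_le (le_max_right ku kv) hcv.2.1,
    chainProd, chainProd, chainProd, ← prod_range_map_sumPerm]
  simp only [longestOf_union_image (hcu.2.2 _)]

end DirectSum

section Backward

variable {n : ℕ}

@[simp]
lemma revPerm_mul_revPerm : (Fin.revPerm : Perm (Fin n)) * Fin.revPerm = 1 := by
  ext
  simp

lemma descending_one : Descending n 1 :=
  descending_iff_exists_chain.2 ⟨0, fun _ => ∅, ⟨by simp, by simp, by simp⟩, rfl⟩

theorem Descending.revPerm_mul (hn : 1 < n) {w : Perm (Fin n)} (hw : Descending n w) :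
    Descending n (Fin.revPerm * w) := by
  obtain ⟨k, c, hc, rfl⟩ := descending_iff_exists_chain.1 hw
  refine descending_iff_exists_chain.2 ?_
  by_cases h₀ : c 0 = range (n - 1)
  · have hk : k ≠ 0 := fun hk =>
      (nonempty_range_iff.2 (by omega)).ne_empty (h₀.symm.trans (hc.2.1 0 (by omega)))
    obtain ⟨k, rfl⟩ := Nat.exists_eq_succ_of_ne_zero hk
    refine ⟨k, fun m => c (m + 1), ⟨fun m hm => hc.1 _ (by omega), fun m hm => hc.2.1 _ (by omega),
      fun m => hc.2.2 _⟩, ?_⟩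
    rw [chainProd_succ, h₀, longestOf_range, ← mul_assoc, revPerm_mul_revPerm, one_mul]
  · refine ⟨k + 1, fun m => if m = 0 then range (n - 1) else c (m - 1),
      ⟨fun m hm => ?_, fun m hm => ?_, fun m => ?_⟩, ?_⟩
    · rcases m with _ | m
      · exact ssubset_of_subset_of_ne (hc.2.2 0) h₀
      · simpa using hc.1 m (by omega)
    · simpa [show m ≠ 0 by omega] using hc.2.1 (m - 1) (by omega)
    · dsimp only
      split_ifs
      exacts [subset_rfl, hc.2.2 _]
    · simp [chainProd_succ, longestOf_range]

lemma Separable.revPerm_mul {w : Perm (Fin n)} (hw : Separable n w) :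
    Separable n (Fin.revPerm * w) := by
  rintro ⟨i₁, i₂, i₃, i₄, h₁₂, h₂₃, h₃₄, hpat⟩
  exact hw ⟨i₁, i₂, i₃, i₄, h₁₂, h₂₃, h₃₄, (StrictAntiOn.is2413Or3142_iff
    (Fin.rev_strictAnti.strictAntiOn Set.univ) trivial trivial trivial trivial).1 hpat⟩

lemma Separable.of_strictMono {m : ℕ} {w : Perm (Fin n)} (hw : Separable n w) {u : Perm (Fin m)}
    {e : Fin m → Fin n} (he : StrictMono e) (h : ∀ i, w (e i) = e (u i)) : Separable m u := by
  rintro ⟨i₁, i₂, i₃, i₄, h₁₂, h₂₃, h₃₄, hpat⟩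
  have := (StrictMono.is2413Or3142_iff he).2 hpat
  rw [← h, ← h, ← h, ← h] at this
  exact hw ⟨e i₁, e i₂, e i₃, e i₄, he h₁₂, he h₂₃, he h₃₄, this⟩

lemma val_lt_card_filter_iff {P : Fin n → Prop} [DecidablePred P]
    (hP : ∀ p q, p < q → P q → P p) (i : Fin n) : (i : ℕ) < #(univ.filter P) ↔ P i := by
  constructor
  · intro hi
    by_contra hPi
    have : univ.filter P ⊆ Iio i := fun j hj => by
      simp only [mem_filter, mem_univ, true_and] at hj
      exact mem_Iio.2 (lt_of_not_ge fun hij => hPi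
        (hij.eq_or_lt.elim (fun h => h ▸ hj) fun h => hP _ _ h hj))
    have := card_le_card this
    rw [Fin.card_Iio] at this
    omega
  · intro hPi
    have : Iic i ⊆ univ.filter P := fun j hj => by
      simp only [mem_filter, mem_univ, true_and]
      exact (mem_Iic.1 hj).eq_or_lt.elim (fun h => h ▸ hPi) fun h => hP _ _ h hPi
    have := card_le_card this
    rw [Fin.card_Iic] at this
    omega

/-- Cut after the largest value `M` taken up to the position of the minimum: a value `≤ M` to
the right of a value `> M` would give a `3142`. -/
theorem exists_forall_lt_iff_of_separable {w : Perm (Fin n)} (hsep : Separable n w)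
    {k l : Fin n} (hk : ∀ i, w k ≤ w i) (hl : ∀ i, w i ≤ w l) (hkl : k < l) :
    ∃ a, 0 < a ∧ a < n ∧ ∀ i : Fin n, (i : ℕ) < a ↔ (w i : ℕ) < a := by
  classical
  obtain ⟨i₀, hi₀, hmax⟩ := (univ.filter (· ≤ k)).exists_max_image w ⟨k, by simp⟩
  simp only [mem_filter, mem_univ, true_and] at hi₀ hmax
  have hdown : ∀ p q, p < q → w q ≤ w i₀ → w p ≤ w i₀ := by
    intro p q hpq hq
    by_contra! hp
    have hkp : k < p := lt_of_not_ge fun h => hp.not_ge (hmax p h)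
    have hqk : w k < w q := lt_of_le_of_ne (hk q) (w.injective.ne (hkp.trans hpq).ne)
    rcases hi₀.lt_or_eq with hlt | rfl
    · refine hsep ⟨i₀, k, p, q, hlt, hkp, hpq, Or.inr ⟨hqk, ?_, hp⟩⟩
      exact lt_of_le_of_ne hq (w.injective.ne (hi₀.trans_lt (hkp.trans hpq)).ne')
    · exact hqk.not_ge hq
  have hM : w i₀ < w l := lt_of_le_of_ne (hl i₀) (w.injective.ne (hi₀.trans_lt hkl).ne)
  have hcard : #(univ.filter fun j => w j ≤ w i₀) = w i₀ + 1 := by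
    rw [← card_map w.toEmbedding, ← Fin.card_Iic (w i₀)]
    congr 1
    ext j
    simp only [mem_map_equiv, mem_filter, mem_univ, true_and, apply_symm_apply, mem_Iic]
  refine ⟨w i₀ + 1, by omega, by have := (w l).2; omega, fun i => ?_⟩
  rw [← hcard, val_lt_card_filter_iff hdown, Fin.le_def]
  omega

lemma descending_of_min_lt_max
    (ih : ∀ m < n, ∀ u : Perm (Fin m), Separable m u → Descending m u) {w : Perm (Fin n)}
    (hsep : Separable n w) {k l : Fin n} (hk : ∀ i, w k ≤ w i) (hl : ∀ i, w i ≤ w l)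
    (hkl : k < l) : Descending n w := by
  obtain ⟨a, ha, han, hpre⟩ := exists_forall_lt_iff_of_separable hsep hk hl hkl
  obtain ⟨b, rfl⟩ := Nat.exists_eq_add_of_le han.le
  obtain ⟨u, v, rfl⟩ := exists_sumPerm_eq hpre
  exact (ih a (by omega) u (hsep.of_strictMono (Fin.strictMono_castAdd b) (by simp))).sumPerm
    (ih b (by omega) v (hsep.of_strictMono (Fin.strictMono_natAdd a) (by simp)))

theorem descending_of_separable {w : Perm (Fin n)} (hsep : Separable n w) : Descending n w := by
  induction n using Nat.strong_induction_on with
  | _ n ih =>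
  by_cases hn : n ≤ 1
  · have := Fin.subsingleton_iff_le_one.2 hn
    exact Subsingleton.elim 1 w ▸ descending_one
  have : Nonempty (Fin n) := ⟨⟨0, by omega⟩⟩
  obtain ⟨k, hk⟩ := Finite.exists_min w
  obtain ⟨l, hl⟩ := Finite.exists_max w
  have hkl : k ≠ l := by
    rintro rfl
    have := w.injective ((le_antisymm (hl ⟨0, by omega⟩) (hk _)).trans
      (le_antisymm (hl ⟨1, by omega⟩) (hk _)).symm)
    simp at this
  have ih' : ∀ m < n, ∀ u : Perm (Fin m), Separable m u → Descending m u := fun m hm _ => ih m hm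
  rcases lt_or_gt_of_ne hkl with h | h
  · exact descending_of_min_lt_max ih' hsep hk hl h
  · simpa [← mul_assoc] using (descending_of_min_lt_max ih' hsep.revPerm_mul
      (fun i => Fin.rev_le_rev.2 (hl i)) (fun i => Fin.rev_le_rev.2 (hk i)) h).revPerm_mul
      (by omega)

end Backward

/-- A permutation is descending if and only if it is separable (avoids `2413` and `3142`). -/
theorem descending_iff_separable (n : ℕ) (w : Perm (Fin n)) :
    Descending n w ↔ Separable n w :=
  ⟨separable_of_descending, descending_of_separable⟩

end KLPaper
end

section
/- Let λ ⊢ n and let CSS(λ) be the column super-strict tableau of shape λ. For every P ∈ SYT(λ), the unique permutation v ∈ S_n with v ↝ (P, CSS(λ)) under the RSK correspondence has one-line notation obtained by reading the entries of P column by column from left to right, each column from bottom to top. -/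
/-!
Read `P` column by column, each column bottom to top. An entry of column `j` exceeds the
entries of columns `< j` in the rows weakly above its own, and is smaller than the entries of
column `j` below it, which were inserted earlier. So while column `j` is read, the `r` entries
inserted so far sit at the ends of rows `0, …, r - 1`, each insertion bumps all of them one
row down, and the new box is the `(r + 1)`-st box of column `j`, which is where `CSS(λ)` puts
the next label. Hence `colReading P ↝ (P, CSS(λ))`, and `v` is `colReading P` because RSK is
injective on words with distinct letters.
-/

namespace KLPaper

open Equiv

section ListLemmas

variable {α : Type*}

lemma getD_map_range_of_lt {f : ℕ → α} {t N : ℕ} (h : t < N) (d : α) :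
    ((List.range N).map f).getD t d = f t := by
  rw [List.getD_eq_getElem _ _ (by simpa using h)]
  simp

lemma getD_map_range_of_le {f : ℕ → α} {t N : ℕ} (h : N ≤ t) (d : α) :
    ((List.range N).map f).getD t d = d :=
  List.getD_eq_default _ _ (by simpa using h)

lemma getD_set_of_ne {l : List α} {i t : ℕ} (h : i ≠ t) (v d : α) :
    (l.set i v).getD t d = l.getD t d := by
  simp [h]

lemma getD_set_self {l : List α} {i : ℕ} (h : i < l.length) (v d : α) :
    (l.set i v).getD i d = v := by
  simp [h]

lemma set_getD_self {l : List α} {i : ℕ} (h : i < l.length) (d : α) :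
    l.set i (l.getD i d) = l := by
  rw [List.getD_eq_getElem _ _ h, List.set_getElem_self]

lemma set_map_range {f : ℕ → α} {N r : ℕ} (v : α) :
    ((List.range N).map f).set r v = (List.range N).map (fun t => if t = r then v else f t) := by
  apply List.ext_getElem (by simp)
  intro i _ _
  simp only [List.getElem_set, List.getElem_map, List.getElem_range, eq_comm (a := r)]

lemma countP_range_getD (l : List α) (d : α) (p : α → Bool) :
    (List.range l.length).countP (fun i => p (l.getD i d)) = l.countP p := by
  induction l with
  | nil => simp
  | cons a as ih =>
    rw [List.length_cons, List.range_succ_eq_map, List.countP_cons, List.countP_map]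
    simp only [List.getD_cons_zero, List.getD_cons_succ, Function.comp_def]
    rw [ih, List.countP_cons]

lemma length_getD (A : List (List α)) (t : ℕ) :
    (A.getD t []).length = (A.map List.length).getD t 0 := by
  simpa using (List.getD_map (n := t) List.length (l := A) (d := [])).symm

lemma map_length_eq_of_getD {A B : List (List α)} (h1 : A.length = B.length)
    (h2 : ∀ t, (A.getD t []).length = (B.getD t []).length) :
    A.map List.length = B.map List.length := by
  apply List.ext_getElem (by simp [h1])
  intro t ht1 ht2
  have := h2 t
  rw [List.getD_eq_getElem _ _ (by simpa using ht1),
    List.getD_eq_getElem _ _ (by simpa using ht2)] at this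
  simpa using this

lemma length_getD_eq_of_map_length_eq {A B : List (List α)}
    (h : A.map List.length = B.map List.length) (t : ℕ) :
    (A.getD t []).length = (B.getD t []).length := by
  rw [length_getD, length_getD, h]

lemma filter_range_eq_range_countP {q : ℕ → Bool} (n : ℕ)
    (hq : ∀ i j, i ≤ j → j < n → q j = true → q i = true) :
    (List.range n).filter q = List.range ((List.range n).countP q) := by
  induction n with
  | zero => simp
  | succ n ih =>
    rw [List.range_succ, List.filter_append, List.countP_append]
    by_cases hqn : q n = true
    · have hall : ∀ x ∈ List.range n, q x = true := fun x hx =>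
        hq x n (by simp at hx; omega) (by omega) hqn
      rw [List.filter_eq_self.mpr hall, List.countP_eq_length.mpr hall]
      simp [hqn, List.range_succ]
    · rw [ih (fun i j h1 h2 h3 => hq i j h1 (by omega) h3)]
      simp [hqn]

end ListLemmas

section InsertRow

variable {l R : List ℕ} {x y : ℕ}

lemma insertRow_of_forall_le (h : ∀ e ∈ l, e ≤ x) : insertRow l x = (l ++ [x], none) := by
  induction l with
  | nil => simp [insertRow]
  | cons a as ih =>
    rw [insertRow, if_neg (not_lt.mpr (h a List.mem_cons_self)),
      ih (fun e he => h e (List.mem_cons_of_mem _ he))]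
    simp

lemma insertRow_append_singleton {c : ℕ} (h : ∀ e ∈ l, e ≤ x) (hc : x < c) :
    insertRow (l ++ [c]) x = (l ++ [x], some c) := by
  induction l with
  | nil => simp [insertRow, hc]
  | cons a as ih =>
    rw [List.cons_append, insertRow, if_neg (not_lt.mpr (h a List.mem_cons_self)),
      ih (fun e he => h e (List.mem_cons_of_mem _ he))]
    simp

lemma eq_append_of_insertRow_eq_none (h : insertRow l x = (R, none)) : R = l ++ [x] := by
  induction l generalizing R with
  | nil => simp_all [insertRow]
  | cons a as ih =>
    by_cases hxa : x < a
    · simp [insertRow, hxa] at h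
    · rcases hp : insertRow as x with ⟨R₁, o⟩
      simp only [insertRow, if_neg hxa, hp, Prod.mk.injEq] at h
      obtain ⟨rfl, rfl⟩ := h
      simp [ih hp]

lemma exists_of_insertRow_eq_some (h : insertRow l x = (R, some y)) :
    ∃ p < l.length, l.getD p 0 = y ∧ R = l.set p x ∧ x < y := by
  induction l generalizing R with
  | nil => simp [insertRow] at h
  | cons a as ih =>
    by_cases hxa : x < a
    · simp only [insertRow, if_pos hxa, Prod.mk.injEq, Option.some.injEq] at h
      obtain ⟨rfl, rfl⟩ := h
      exact ⟨0, by simp, by simp, by simp, hxa⟩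
    · rcases hp : insertRow as x with ⟨R₁, o⟩
      simp only [insertRow, if_neg hxa, hp, Prod.mk.injEq] at h
      obtain ⟨rfl, rfl⟩ := h
      obtain ⟨p, hp₁, hp₂, rfl, hxy⟩ := ih hp
      exact ⟨p + 1, by simpa using hp₁, by simpa using hp₂, by simp, hxy⟩

lemma eq_or_mem_of_mem_insertRow {e : ℕ} (h : e ∈ (insertRow l x).1) : e = x ∨ e ∈ l := by
  induction l with
  | nil => simpa [insertRow] using h
  | cons a as ih =>
    by_cases hxa : x < a
    · simp only [insertRow, if_pos hxa, List.mem_cons] at h ⊢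
      tauto
    · simp only [insertRow, if_neg hxa, List.mem_cons] at h ⊢
      rcases h with h | h
      · exact Or.inr (Or.inl h)
      · rcases ih h with h | h <;> tauto

lemma insertRow_fst_pairwise (hs : l.Pairwise (· < ·)) (hx : x ∉ l) :
    (insertRow l x).1.Pairwise (· < ·) := by
  induction l with
  | nil => simp [insertRow]
  | cons a as ih =>
    rw [List.pairwise_cons] at hs
    by_cases hxa : x < a
    · rw [insertRow, if_pos hxa]
      exact List.pairwise_cons.mpr ⟨fun e he => hxa.trans (hs.1 e he), hs.2⟩
    · rw [insertRow, if_neg hxa]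
      refine List.pairwise_cons.mpr
        ⟨fun e he => ?_, ih hs.2 (fun h => hx (List.mem_cons_of_mem _ h))⟩
      rcases eq_or_mem_of_mem_insertRow he with rfl | he
      · exact lt_of_le_of_ne (not_lt.mp hxa) (fun h => hx (h ▸ List.mem_cons_self))
      · exact hs.1 e he

lemma insertRow_perm (l : List ℕ) (x : ℕ) :
    ((insertRow l x).1 ++ (insertRow l x).2.toList).Perm (x :: l) := by
  induction l with
  | nil => simp [insertRow]
  | cons a as ih =>
    by_cases hxa : x < a
    · simp [insertRow, hxa]
    · rw [insertRow, if_neg hxa]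
      exact (ih.cons a).trans (List.Perm.swap x a as)

lemma eq_of_insertRow_eq_some {l' : List ℕ} {x' : ℕ}
    (hs : l.Pairwise (· < ·)) (hs' : l'.Pairwise (· < ·)) (hlen : l.length = l'.length)
    (h : insertRow l x = (R, some y)) (h' : insertRow l' x' = (R, some y)) :
    l = l' ∧ x = x' := by
  obtain ⟨p, hp, hpy, rfl, hxy⟩ := exists_of_insertRow_eq_some h
  obtain ⟨p', hp', hpy', hR, hxy'⟩ := exists_of_insertRow_eq_some h'
  -- At the larger of two distinct bump positions one new row shows its inserted entry `< y`,
  -- the other an old entry `> y`.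
  have key : ∀ (s s' : List ℕ) (q q' z z' : ℕ), s'.Pairwise (· < ·) →
      q < s.length → q' < s'.length → s'.getD q' 0 = y →
      s.set q z = s'.set q' z' → z < y → q' < q → False := by
    intro s s' q q' z z' hsrt hq hq' hy hset hz hlt
    have hq's : q < s'.length := by
      have := congrArg List.length hset
      simp only [List.length_set] at this
      omega
    have h1 := getD_set_self hq z 0
    rw [hset, getD_set_of_ne hlt.ne] at h1
    have h2 : s'.getD q' 0 < s'.getD q 0 := by
      rw [List.getD_eq_getElem _ _ hq', List.getD_eq_getElem _ _ hq's]
      exact List.pairwise_iff_getElem.mp hsrt _ _ _ _ hlt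
    omega
  obtain rfl : p = p' := by
    rcases lt_trichotomy p p' with hlt | heq | hlt
    · exact (key l' l p' p x' x hs hp' hp hpy hR.symm hxy' hlt).elim
    · exact heq
    · exact (key l l' p p' x x' hs' hp hp' hpy' hR hxy hlt).elim
  obtain rfl : x = x' := by
    have := congrArg (·.getD p 0) hR
    simpa only [getD_set_self hp, getD_set_self (hlen ▸ hp)] using this
  refine ⟨?_, rfl⟩
  calc l = (l.set p x).set p y := by rw [List.set_set, ← hpy, set_getD_self hp]
    _ = (l'.set p x).set p y := by rw [hR]
    _ = l' := by rw [List.set_set, ← hpy', set_getD_self (hlen ▸ hp)]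

end InsertRow

section InsertTab

lemma insertTab_flatten_perm (T : List (List ℕ)) (x : ℕ) :
    (insertTab T x).flatten.Perm (x :: T.flatten) := by
  induction T generalizing x with
  | nil => simp [insertTab]
  | cons r rs ih =>
    have hperm := insertRow_perm r x
    rcases hp : insertRow r x with ⟨R, _ | y⟩
    · simp only [hp, Option.toList_none, List.append_nil] at hperm
      simpa [insertTab, hp] using hperm.append_right rs.flatten
    · simp only [hp, Option.toList_some] at hperm
      simp only [insertTab, hp, List.flatten_cons]
      refine ((ih y).append_left R).trans ?_
      simpa using hperm.append_right rs.flatten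

def AddsBox (T T' : List (List ℕ)) (i : ℕ) : Prop :=
  i ≤ T.length ∧ T'.length = max T.length (i + 1) ∧
    ∀ t, (T'.getD t []).length = (T.getD t []).length + if t = i then 1 else 0

lemma exists_addsBox_insertTab (T : List (List ℕ)) (x : ℕ) :
    ∃ i, AddsBox T (insertTab T x) i := by
  induction T generalizing x with
  | nil => exact ⟨0, by simp, by simp [insertTab], fun t => by cases t <;> simp [insertTab]⟩
  | cons r rs ih =>
    rcases hp : insertRow r x with ⟨R, _ | y⟩
    · obtain rfl := eq_append_of_insertRow_eq_none hp
      exact ⟨0, by simp, by simp [insertTab, hp], fun t => by cases t <;> simp [insertTab, hp]⟩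
    · obtain ⟨p, -, -, rfl, -⟩ := exists_of_insertRow_eq_some hp
      obtain ⟨i, hi, hlen, hrow⟩ := ih y
      refine ⟨i + 1, by simpa using hi, ?_, fun t => ?_⟩
      · simp [insertTab, hp, hlen, Nat.succ_max_succ]
      · cases t with
        | zero => simp [insertTab, hp]
        | succ t => simpa [insertTab, hp] using hrow t

lemma insertTab_rows_pairwise (T : List (List ℕ)) (x : ℕ) (hnd : (x :: T.flatten).Nodup)
    (hs : ∀ r ∈ T, r.Pairwise (· < ·)) : ∀ r ∈ insertTab T x, r.Pairwise (· < ·) := by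
  induction T generalizing x with
  | nil => simp [insertTab]
  | cons r rs ih =>
    have hxr : x ∉ r := fun h => (List.nodup_cons.mp hnd).1 (by simp [h])
    have hR := insertRow_fst_pairwise (hs r List.mem_cons_self) hxr
    rcases hp : insertRow r x with ⟨R, _ | y⟩
    · simp only [hp] at hR
      simp only [insertTab, hp, List.mem_cons, forall_eq_or_imp]
      exact ⟨hR, fun r' h => hs r' (List.mem_cons_of_mem _ h)⟩
    · simp only [hp] at hR
      obtain ⟨p, hp₁, hp₂, -, -⟩ := exists_of_insertRow_eq_some hp
      have hyr : y ∈ r := hp₂ ▸ List.getD_eq_getElem r 0 hp₁ ▸ List.getElem_mem hp₁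
      have hnd' : (y :: rs.flatten).Nodup := by
        have h := (List.nodup_cons.mp hnd).2
        rw [List.flatten_cons, List.nodup_append] at h
        exact List.nodup_cons.mpr ⟨fun hy => h.2.2 _ hyr _ hy rfl, h.2.1⟩
      simp only [insertTab, hp, List.mem_cons, forall_eq_or_imp]
      exact ⟨hR, ih y hnd' (fun r' h => hs r' (List.mem_cons_of_mem _ h))⟩

lemma insertTab_inj {T T' : List (List ℕ)} {x x' : ℕ}
    (hs : ∀ r ∈ T, r.Pairwise (· < ·)) (hs' : ∀ r ∈ T', r.Pairwise (· < ·))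
    (hshape : T.map List.length = T'.map List.length) (h : insertTab T x = insertTab T' x') :
    T = T' ∧ x = x' := by
  induction T generalizing T' x x' with
  | nil =>
    obtain rfl : T' = [] := by simpa using hshape.symm
    simpa [insertTab] using h
  | cons r rs ih =>
    rcases T' with _ | ⟨r', rs'⟩
    · simp at hshape
    simp only [List.map_cons, List.cons.injEq] at hshape
    rcases hp : insertRow r x with ⟨R, _ | y⟩ <;>
      rcases hp' : insertRow r' x' with ⟨R', _ | y'⟩ <;>
      simp only [insertTab, hp, hp', List.cons.injEq] at h
    · obtain rfl := eq_append_of_insertRow_eq_none hp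
      obtain rfl := eq_append_of_insertRow_eq_none hp'
      obtain ⟨h₁, rfl⟩ := h
      obtain ⟨rfl, hx⟩ := List.append_inj' h₁ (by simp)
      exact ⟨rfl, List.singleton_inj.mp hx⟩
    · obtain rfl := eq_append_of_insertRow_eq_none hp
      obtain ⟨q, -, -, rfl, -⟩ := exists_of_insertRow_eq_some hp'
      have := congrArg List.length h.1
      simp only [List.length_append, List.length_set, List.length_singleton] at this
      have := hshape.1
      omega
    · obtain rfl := eq_append_of_insertRow_eq_none hp'
      obtain ⟨q, -, -, rfl, -⟩ := exists_of_insertRow_eq_some hp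
      have := congrArg List.length h.1
      simp only [List.length_append, List.length_set, List.length_singleton] at this
      have := hshape.1
      omega
    · obtain ⟨rfl, h₂⟩ := h
      obtain ⟨rfl, rfl⟩ := ih (fun a ha => hs a (List.mem_cons_of_mem _ ha))
        (fun a ha => hs' a (List.mem_cons_of_mem _ ha)) hshape.2 h₂
      obtain ⟨rfl, rfl⟩ := eq_of_insertRow_eq_some (hs r List.mem_cons_self)
        (hs' r' List.mem_cons_self) hshape.1 hp hp'
      exact ⟨rfl, rfl⟩

lemma insertTab_map_range' (row row' : ℕ → List ℕ) (x : ℕ → ℕ) (r m t₀ : ℕ)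
    (h₀ : t₀ ≤ r) (hm : r ≤ t₀ + m)
    (hbump : ∀ t, t₀ ≤ t → t < r → insertRow (row t) (x t) = (row' t, some (x (t + 1))))
    (hstop : r < t₀ + m → insertRow (row r) (x r) = (row' r, none))
    (hnew : r = t₀ + m → row' r = [x r]) (hbelow : ∀ t, r < t → row' t = row t) :
    insertTab ((List.range' t₀ m).map row) (x t₀)
      = (List.range' t₀ (max m (r + 1 - t₀))).map row' := by
  induction m generalizing t₀ with
  | zero =>
    obtain rfl : r = t₀ := by omega
    simp [insertTab, List.range'_one, hnew rfl]
  | succ m ih =>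
    rw [List.range'_succ, List.map_cons]
    rcases h₀.eq_or_lt with rfl | hlt
    · rw [insertTab, hstop (by omega), Nat.max_eq_left (by omega), List.range'_succ,
        List.map_cons]
      dsimp only
      congr 1
      exact List.map_congr_left fun t ht => (hbelow t (List.mem_range'_1.mp ht).1).symm
    · rw [insertTab, hbump t₀ le_rfl hlt]
      dsimp only
      rw [ih (t₀ + 1) (by omega) (by omega) (fun t ht₁ ht₂ => hbump t (by omega) ht₂)
        (fun _ => hstop (by omega)) (fun _ => hnew (by omega)),
        show max (m + 1) (r + 1 - t₀) = max m (r + 1 - (t₀ + 1)) + 1 by omega,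
        List.range'_succ, List.map_cons]

end InsertTab

section Recording

def appendAt (Q : List (List ℕ)) (i k : ℕ) : List (List ℕ) :=
  if i < Q.length then Q.set i (Q.getD i [] ++ [k]) else Q ++ [[k]]

variable {T T' Q : List (List ℕ)} {i k : ℕ}

lemma addBox_eq_appendAt (h : AddsBox T T' i) (hQT : Q.map List.length = T.map List.length) :
    addBox Q T' k = appendAt Q i k := by
  obtain ⟨hi, hlen, hrow⟩ := h
  have hfind : (List.range T'.length).find?
      (fun t => decide ((Q.getD t []).length < (T'.getD t []).length)) = some i := by
    simp only [List.find?_range_eq_some, hrow, length_getD_eq_of_map_length_eq hQT,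
      List.mem_range, hlen]
    refine ⟨by simp, by omega, fun j hj => by simp [hj.ne]⟩
  rw [addBox, hfind, appendAt]

lemma map_length_appendAt (h : AddsBox T T' i) (hQT : Q.map List.length = T.map List.length) :
    (appendAt Q i k).map List.length = T'.map List.length := by
  obtain ⟨hi, hlen, hrow⟩ := h
  have hQl : Q.length = T.length := by simpa using congrArg List.length hQT
  unfold appendAt
  split_ifs with hiq
  · apply map_length_eq_of_getD (by simp [hlen]; omega)
    intro t
    rw [hrow t, ← length_getD_eq_of_map_length_eq hQT t]
    by_cases ht : t = i
    · rw [ht, getD_set_self hiq, if_pos rfl, List.length_append, List.length_singleton]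
    · rw [getD_set_of_ne (Ne.symm ht), if_neg ht, Nat.add_zero]
  · apply map_length_eq_of_getD (by simp [hlen]; omega)
    intro t
    rw [hrow t, ← length_getD_eq_of_map_length_eq hQT t]
    rcases lt_trichotomy t Q.length with ht | rfl | ht
    · rw [List.getD_append _ _ _ _ ht, if_neg (by omega), Nat.add_zero]
    · simp [show Q.length = i by omega]
    · rw [List.getD_eq_default _ _ (by simp; omega), List.getD_eq_default _ _ (by omega),
        if_neg (by omega), Nat.add_zero]

lemma ne_nil_of_mem_appendAt (hQ : ∀ r ∈ Q, r ≠ []) : ∀ r ∈ appendAt Q i k, r ≠ [] := by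
  intro r hr
  unfold appendAt at hr
  split_ifs at hr
  · rcases List.mem_or_eq_of_mem_set hr with h | rfl
    exacts [hQ r h, by simp]
  · rcases List.mem_append.mp hr with h | h
    exacts [hQ r h, by simp_all]

lemma lt_of_mem_flatten_appendAt (hQ : ∀ e ∈ Q.flatten, e < k) :
    ∀ e ∈ (appendAt Q i k).flatten, e < k + 1 := by
  intro e he
  obtain ⟨r, hr, her⟩ := List.mem_flatten.mp he
  unfold appendAt at hr
  split_ifs at hr with hiq
  · rcases List.mem_or_eq_of_mem_set hr with h | rfl
    · exact (hQ e (List.mem_flatten.mpr ⟨r, h, her⟩)).trans (Nat.lt_succ_self k)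
    · rcases List.mem_append.mp her with h | h
      · have hmem : Q.getD i [] ∈ Q := by
          rw [List.getD_eq_getElem _ _ hiq]; exact List.getElem_mem _
        exact (hQ e (List.mem_flatten.mpr ⟨_, hmem, h⟩)).trans (Nat.lt_succ_self k)
      · simp_all
  · rcases List.mem_append.mp hr with h | h
    · exact (hQ e (List.mem_flatten.mpr ⟨r, h, her⟩)).trans (Nat.lt_succ_self k)
    · simp_all

lemma filter_map_filter_appendAt (hQ : ∀ r ∈ Q, r ≠ []) (hQk : ∀ e ∈ Q.flatten, e < k) :
    ((appendAt Q i k).map (·.filter (· < k))).filter (fun r => !r.isEmpty) = Q := by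
  have hrow : ∀ r ∈ Q, r.filter (· < k) = r := fun r hr =>
    List.filter_eq_self.mpr fun e he => by simpa using hQk e (List.mem_flatten.mpr ⟨r, hr, he⟩)
  have hmap : Q.map (·.filter (· < k)) = Q := by
    conv_rhs => rw [← List.map_id Q]
    exact List.map_congr_left hrow
  have hfilter : Q.filter (fun r => !r.isEmpty) = Q :=
    List.filter_eq_self.mpr fun r hr => by simpa [List.isEmpty_iff] using hQ r hr
  unfold appendAt
  split_ifs with hiq
  · have hmem : Q.getD i [] ∈ Q := by
      rw [List.getD_eq_getElem _ _ hiq]; exact List.getElem_mem _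
    rw [List.map_set, hmap, List.filter_append, hrow _ hmem, List.filter_singleton,
      decide_eq_false (lt_irrefl k), cond_false, List.append_nil, set_getD_self hiq, hfilter]
  · rw [List.map_append, hmap, List.filter_append, hfilter]
    simp

lemma appendAt_inj {Q' : List (List ℕ)} {i' : ℕ}
    (hQ : ∀ r ∈ Q, r ≠ []) (hQ' : ∀ r ∈ Q', r ≠ [])
    (hQk : ∀ e ∈ Q.flatten, e < k) (hQk' : ∀ e ∈ Q'.flatten, e < k)
    (h : appendAt Q i k = appendAt Q' i' k) : Q = Q' := by
  rw [← filter_map_filter_appendAt (i := i) hQ hQk,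
    ← filter_map_filter_appendAt (i := i') hQ' hQk', h]

end Recording

section RSKInjective

structure IsRSKState (k : ℕ) (T Q : List (List ℕ)) : Prop where
  rows_sorted : ∀ r ∈ T, r.Pairwise (· < ·)
  shape_eq : Q.map List.length = T.map List.length
  recording_ne_nil : ∀ r ∈ Q, r ≠ []
  recording_lt : ∀ e ∈ Q.flatten, e < k

lemma isRSKState_nil (k : ℕ) : IsRSKState k [] [] := ⟨by simp, rfl, by simp, by simp⟩

lemma IsRSKState.insert {k x : ℕ} {T Q : List (List ℕ)} (hS : IsRSKState k T Q)
    (hx : (x :: T.flatten).Nodup) :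
    IsRSKState (k + 1) (insertTab T x) (addBox Q (insertTab T x) k) := by
  obtain ⟨i, hi⟩ := exists_addsBox_insertTab T x
  rw [addBox_eq_appendAt hi hS.shape_eq]
  exact ⟨insertTab_rows_pairwise T x hx hS.rows_sorted, map_length_appendAt hi hS.shape_eq,
    ne_nil_of_mem_appendAt hS.recording_ne_nil, lt_of_mem_flatten_appendAt hS.recording_lt⟩

lemma RSKword_cons (x : ℕ) (xs : List ℕ) (k : ℕ) (T Q : List (List ℕ)) :
    RSKword (x :: xs) k (T, Q) =
      RSKword xs (k + 1) (insertTab T x, addBox Q (insertTab T x) k) := rfl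

lemma RSKword_append (u u' : List ℕ) (k : ℕ) (PQ : List (List ℕ) × List (List ℕ)) :
    RSKword (u ++ u') k PQ = RSKword u' (k + u.length) (RSKword u k PQ) := by
  induction u generalizing k PQ with
  | nil => rfl
  | cons a u ih =>
    simp only [List.cons_append, RSKword, ih, List.length_cons]
    rw [Nat.add_assoc, Nat.add_comm 1]

lemma RSKword_fst_flatten_perm (w : List ℕ) (k : ℕ) (T Q : List (List ℕ)) :
    (RSKword w k (T, Q)).1.flatten.Perm (w ++ T.flatten) := by
  induction w generalizing k T Q with
  | nil => simp [RSKword]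
  | cons x xs ih =>
    rw [RSKword_cons]
    exact (ih _ _ _).trans (((insertTab_flatten_perm T x).append_left xs).trans List.perm_middle)

/-- Equal outputs force equal states after the first insertion; deleting the label `k` from the
recording tableau recovers `Q`, hence the shape of `T`, and insertion into tableaux of equal
shape is injective. -/
lemma RSKword_inj_of_isRSKState {w w' : List ℕ} {k : ℕ} {T T' Q Q' : List (List ℕ)}
    (hlen : w.length = w'.length)
    (hw : (w ++ T.flatten).Nodup) (hw' : (w' ++ T'.flatten).Nodup)
    (hS : IsRSKState k T Q) (hS' : IsRSKState k T' Q')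
    (h : RSKword w k (T, Q) = RSKword w' k (T', Q')) :
    w = w' ∧ T = T' ∧ Q = Q' := by
  induction w generalizing w' k T T' Q Q' with
  | nil =>
    obtain rfl : w' = [] := List.length_eq_zero_iff.mp hlen.symm
    simpa [RSKword] using h
  | cons x xs ih =>
    obtain _ | ⟨x', xs'⟩ := w'
    · simp at hlen
    have hx : (x :: T.flatten).Nodup :=
      ((List.sublist_append_right xs _).cons_cons x).nodup hw
    have hx' : (x' :: T'.flatten).Nodup :=
      ((List.sublist_append_right xs' _).cons_cons x').nodup hw'
    have hperm (y : ℕ) (ys : List ℕ) (U : List (List ℕ)) :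
        (ys ++ (insertTab U y).flatten).Perm (y :: ys ++ U.flatten) :=
      ((insertTab_flatten_perm U y).append_left ys).trans List.perm_middle
    rw [RSKword_cons, RSKword_cons] at h
    obtain ⟨rfl, hT, hQ⟩ := ih (by simpa using hlen) ((hperm x xs T).nodup_iff.mpr hw)
      ((hperm x' xs' T').nodup_iff.mpr hw') (hS.insert hx) (hS'.insert hx') h
    obtain ⟨i, hi⟩ := exists_addsBox_insertTab T x
    obtain ⟨i', hi'⟩ := exists_addsBox_insertTab T' x'
    rw [addBox_eq_appendAt hi hS.shape_eq, addBox_eq_appendAt hi' hS'.shape_eq] at hQ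
    obtain rfl := appendAt_inj hS.recording_ne_nil hS'.recording_ne_nil hS.recording_lt
      hS'.recording_lt hQ
    obtain ⟨rfl, rfl⟩ := insertTab_inj hS.rows_sorted hS'.rows_sorted
      (hS.shape_eq.symm.trans hS'.shape_eq) hT
    exact ⟨rfl, rfl, rfl⟩

lemma RSKword_inj {w w' : List ℕ} {k : ℕ} (hw : w.Nodup) (hw' : w'.Nodup)
    (h : RSKword w k ([], []) = RSKword w' k ([], [])) : w = w' := by
  have hperm := ((RSKword_fst_flatten_perm w k [] []).symm.trans
    (h ▸ RSKword_fst_flatten_perm w' k [] []))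
  exact (RSKword_inj_of_isRSKState (by simpa using hperm.length_eq) (by simpa using hw)
    (by simpa using hw') (isRSKState_nil k) (isRSKState_nil k) h).1

end RSKInjective

section Tableau

lemma lt_length_filter_iff {l : List ℕ} (hl : l.Pairwise (· ≥ ·)) (j t : ℕ) :
    t < (l.filter (fun x => decide (j < x))).length ↔ j < l.getD t 0 := by
  induction l generalizing t with
  | nil => simp
  | cons a as ih =>
    obtain ⟨has, hl'⟩ := List.pairwise_cons.mp hl
    by_cases hja : j < a
    · rw [List.filter_cons_of_pos (by simpa using hja)]
      cases t with
      | zero => simpa using hja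
      | succ t => simpa using ih hl' t
    · have hnil : as.filter (fun x => decide (j < x)) = [] :=
        List.filter_eq_nil_iff.mpr fun x hx => by have := has x hx; simp; omega
      rw [List.filter_cons_of_neg (by simpa using hja), hnil]
      cases t with
      | zero => simpa using hja
      | succ t =>
        simp only [List.length_nil, Nat.not_lt_zero, List.getD_cons_succ, false_iff]
        by_cases ht : t < as.length
        · have := has _ (List.getElem_mem ht)
          rw [List.getD_eq_getElem _ _ ht]
          omega
        · rw [List.getD_eq_default _ _ (by omega)]
          omega

variable {P : List (List ℕ)} {lam : List ℕ} (hsh : P.map List.length = lam)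
  (hsort : lam.Pairwise (· ≥ ·)) (hrows : ∀ r ∈ P, r.Pairwise (· < ·))
  (hcols : ∀ i j : ℕ, i + 1 < P.length → j < (P.getD (i + 1) []).length →
    entryAt P i j < entryAt P (i + 1) j)

include hsh

lemma length_getD_eq_lam_getD (t : ℕ) : (P.getD t []).length = lam.getD t 0 := by
  rw [length_getD, hsh]

lemma length_lam : lam.length = P.length := by
  simp [← hsh]

lemma colHeight_le_length (j : ℕ) : colHeight lam j ≤ P.length :=
  length_lam hsh ▸ List.length_filter_le _ _

include hsort

lemma lt_colHeight_iff (j t : ℕ) : t < colHeight lam j ↔ j < (P.getD t []).length := by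
  rw [length_getD_eq_lam_getD hsh]
  exact lt_length_filter_iff hsort j t

lemma length_getD_antitone {t t' : ℕ} (h : t ≤ t') :
    (P.getD t' []).length ≤ (P.getD t []).length := by
  rw [length_getD_eq_lam_getD hsh, length_getD_eq_lam_getD hsh]
  rcases h.eq_or_lt with rfl | hlt
  · exact le_rfl
  by_cases ht' : t' < lam.length
  · rw [List.getD_eq_getElem _ _ ht', List.getD_eq_getElem _ _ (by omega)]
    exact List.pairwise_iff_getElem.mp hsort _ _ _ _ hlt
  · rw [List.getD_eq_default _ _ (not_lt.mp ht')]
    exact Nat.zero_le _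

omit hsh hsort in
include hrows in
lemma entryAt_lt_of_lt_col {t c c' : ℕ} (hcc : c < c') (hc' : c' < (P.getD t []).length) :
    entryAt P t c < entryAt P t c' := by
  have ht : t < P.length := by
    by_contra h
    rw [List.getD_eq_default _ _ (not_lt.mp h)] at hc'
    simp at hc'
  have hsorted := hrows _ (List.getD_eq_getElem P [] ht ▸ List.getElem_mem ht)
  unfold entryAt
  rw [List.getD_eq_getElem _ _ (hcc.trans hc'), List.getD_eq_getElem _ _ hc']
  exact List.pairwise_iff_getElem.mp hsorted _ _ _ _ hcc

include hcols in
lemma entryAt_lt_of_lt_row {t t' c : ℕ} (h : t < t') (ht' : t' < P.length)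
    (hc : c < (P.getD t' []).length) : entryAt P t c < entryAt P t' c := by
  induction t' with
  | zero => omega
  | succ u ih =>
    rcases (Nat.lt_succ_iff.mp h).eq_or_lt with rfl | hlt
    · exact hcols t c ht' hc
    · exact (ih hlt (by omega) (hc.trans_le (length_getD_antitone hsh hsort (by omega)))).trans
        (hcols u c ht' hc)

include hrows hcols in
lemma entryAt_lt_entryAt {t t' c c' : ℕ} (htt : t ≤ t') (hcc : c ≤ c')
    (hne : t < t' ∨ c < c') (ht' : t' < P.length) (hc' : c' < (P.getD t' []).length) :
    entryAt P t c < entryAt P t' c' := by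
  rcases hcc.eq_or_lt with rfl | hclt
  · exact entryAt_lt_of_lt_row hsh hsort hcols (hne.resolve_right (lt_irrefl c)) ht' hc'
  rcases htt.eq_or_lt with rfl | htlt
  · exact entryAt_lt_of_lt_col hrows hclt hc'
  · exact (entryAt_lt_of_lt_col hrows hclt
      (hc'.trans_le (length_getD_antitone hsh hsort htlt.le))).trans
      (entryAt_lt_of_lt_row hsh hsort hcols htlt ht' hc')

end Tableau

def boxesBefore (lam : List ℕ) (j : ℕ) : ℕ := ((List.range j).map (colHeight lam)).sum

/-- Row `t` of the insertion tableau obtained after reading the columns `0, …, j - 1` of `P`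
and the bottom `r` entries of column `j`: those `r` entries occupy rows `0, …, r - 1`. -/
def stageRow (P : List (List ℕ)) (lam : List ℕ) (j r t : ℕ) : List ℕ :=
  (P.getD t []).take j ++ (if t < r then [entryAt P (colHeight lam j - (r - t)) j] else [])

/-- RSK tableaux have no empty rows, so while column `0` is read only `r` rows exist. -/
def stageRows (P : List (List ℕ)) (j r : ℕ) : ℕ := if j = 0 then r else P.length

def stageP (P : List (List ℕ)) (lam : List ℕ) (j r : ℕ) : List (List ℕ) :=
  (List.range (stageRows P j r)).map (stageRow P lam j r)

def stageQ (P : List (List ℕ)) (lam : List ℕ) (j r : ℕ) : List (List ℕ) :=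
  (List.range (stageRows P j r)).map fun t =>
    (List.range (min j (P.getD t []).length)).map (fun c => boxesBefore lam c + t + 1) ++
      (if t < r then [boxesBefore lam j + t + 1] else [])

section ColumnInsertion

variable {P : List (List ℕ)} {lam : List ℕ} (hsh : P.map List.length = lam)
  (hsort : lam.Pairwise (· ≥ ·)) (hrows : ∀ r ∈ P, r.Pairwise (· < ·))
  (hcols : ∀ i j : ℕ, i + 1 < P.length → j < (P.getD (i + 1) []).length →
    entryAt P i j < entryAt P (i + 1) j)
  (hpos : ∀ x ∈ lam, 0 < x)

include hsh hsort hrows hcols in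
lemma le_of_mem_take {t t' j : ℕ} (htt' : t ≤ t') (ht' : t' < colHeight lam j) :
    ∀ e ∈ (P.getD t []).take j, e ≤ entryAt P t' j := by
  intro e he
  obtain ⟨c, hc, rfl⟩ := List.mem_iff_getElem.mp he
  simp only [List.length_take, lt_min_iff] at hc
  rw [List.getElem_take, ← List.getD_eq_getElem _ 0 hc.2]
  exact (entryAt_lt_entryAt hsh hsort hrows hcols htt' hc.1.le (Or.inr hc.1)
    (ht'.trans_le (colHeight_le_length hsh j)) ((lt_colHeight_iff hsh hsort j t').mp ht')).le

include hsh hsort hrows hcols in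
lemma insertRow_stageRow_of_lt {j r t : ℕ} (hr : r < colHeight lam j) (ht : t < r) :
    insertRow (stageRow P lam j r t) (entryAt P (colHeight lam j - (r + 1 - t)) j)
      = (stageRow P lam j (r + 1) t, some (entryAt P (colHeight lam j - (r + 1 - (t + 1))) j)) := by
  simp only [stageRow, if_pos ht, if_pos (Nat.lt_succ_of_lt ht),
    show r + 1 - (t + 1) = r - t by omega]
  have hlt : colHeight lam j - (r - t) < colHeight lam j := by omega
  exact insertRow_append_singleton (le_of_mem_take hsh hsort hrows hcols (by omega) (by omega))
    (entryAt_lt_of_lt_row hsh hsort hcols (by omega) (hlt.trans_le (colHeight_le_length hsh j))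
      ((lt_colHeight_iff hsh hsort j _).mp hlt))

include hsh hsort hrows hcols in
lemma insertRow_stageRow_self {j r : ℕ} (hr : r < colHeight lam j) :
    insertRow (stageRow P lam j r r) (entryAt P (colHeight lam j - (r + 1 - r)) j)
      = (stageRow P lam j (r + 1) r, none) := by
  simp only [stageRow, lt_irrefl, if_false, List.append_nil, Nat.lt_succ_self, if_true,
    show r + 1 - r = 1 by omega]
  exact insertRow_of_forall_le (le_of_mem_take hsh hsort hrows hcols (by omega) (by omega))

lemma stageRow_succ_of_lt {j r t : ℕ} (ht : r < t) :
    stageRow P lam j (r + 1) t = stageRow P lam j r t := by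
  simp only [stageRow, if_neg (show ¬ t < r by omega), if_neg (show ¬ t < r + 1 by omega)]

include hsh hsort hrows hcols in
lemma insertTab_stageP {j r : ℕ} (hr : r < colHeight lam j) :
    insertTab (stageP P lam j r) (entryAt P (colHeight lam j - (r + 1)) j)
      = stageP P lam j (r + 1) := by
  have hrP := hr.trans_le (colHeight_le_length hsh j)
  have hpath := fun m hm hstop hnew => insertTab_map_range' (stageRow P lam j r)
    (stageRow P lam j (r + 1)) (fun t => entryAt P (colHeight lam j - (r + 1 - t)) j) r m 0
    (Nat.zero_le r) hm (fun t _ ht => insertRow_stageRow_of_lt hsh hsort hrows hcols hr ht)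
    hstop hnew (fun _ => stageRow_succ_of_lt)
  unfold stageP stageRows
  rw [List.range_eq_range', List.range_eq_range']
  by_cases hj : j = 0
  · subst hj
    simp only [if_true]
    refine (hpath r (by omega) (fun h => absurd h (by omega))
      (fun _ => by simp [stageRow])).trans ?_
    rw [Nat.max_eq_right (by omega), Nat.sub_zero]
  · simp only [if_neg hj]
    refine (hpath P.length (by omega) (fun _ => insertRow_stageRow_self hsh hsort hrows hcols hr)
      (fun h => absurd h (by omega))).trans ?_
    rw [Nat.max_eq_left (by omega)]

lemma map_length_stageQ (j r : ℕ) :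
    (stageQ P lam j r).map List.length = (stageP P lam j r).map List.length := by
  simp only [stageQ, stageP, List.map_map]
  refine List.map_congr_left fun t _ => ?_
  simp only [Function.comp_apply, stageRow, List.length_append, List.length_map,
    List.length_range, List.length_take]
  split_ifs <;> simp

include hsh in
lemma addsBox_stageP {j r : ℕ} (hr : r < colHeight lam j) :
    AddsBox (stageP P lam j r) (stageP P lam j (r + 1)) r := by
  have hrP := hr.trans_le (colHeight_le_length hsh j)
  refine ⟨?_, ?_, fun t => ?_⟩
  · simp only [stageP, stageRows, List.length_map, List.length_range]
    split_ifs <;> omega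
  · simp only [stageP, stageRows, List.length_map, List.length_range]
    split_ifs <;> omega
  · unfold stageP
    by_cases ht : t < stageRows P j (r + 1)
    · rw [getD_map_range_of_lt ht]
      by_cases ht' : t < stageRows P j r
      · rw [getD_map_range_of_lt ht']
        simp only [stageRow, List.length_append]
        split_ifs <;> simp_all <;> omega
      · rw [getD_map_range_of_le (not_lt.mp ht')]
        simp only [stageRows] at ht ht'
        split_ifs at ht ht' with hj
        · subst hj
          simp [stageRow, show t = r by omega]
        · omega
    · rw [getD_map_range_of_le (not_lt.mp ht), getD_map_range_of_le]
      · simp only [stageRows] at ht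
        split_ifs at ht <;> simp <;> omega
      · simp only [stageRows] at ht ⊢
        split_ifs at ht ⊢ <;> omega

include hsh in
lemma appendAt_stageQ {j r : ℕ} (hr : r < colHeight lam j) :
    appendAt (stageQ P lam j r) r (boxesBefore lam j + r + 1) = stageQ P lam j (r + 1) := by
  have hrP := hr.trans_le (colHeight_le_length hsh j)
  unfold appendAt stageQ stageRows
  by_cases hj : j = 0
  · subst hj
    simp only [if_true, List.length_map, List.length_range, lt_irrefl, if_false,
      List.range_succ, List.map_append, List.map_cons, List.map_nil]
    congr 1
    · exact List.map_congr_left fun t ht => by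
        simp [List.mem_range.mp ht, Nat.lt_succ_of_lt (List.mem_range.mp ht)]
    · simp
  · simp only [if_neg hj, List.length_map, List.length_range, if_pos hrP,
      getD_map_range_of_lt hrP, lt_irrefl, if_false, List.append_nil, set_map_range]
    refine List.map_congr_left fun t _ => ?_
    by_cases htr : t = r
    · simp [htr]
    · simp only [if_neg htr]
      split_ifs <;> first | rfl | omega

include hsh in
lemma addBox_stageQ {j r : ℕ} (hr : r < colHeight lam j) :
    addBox (stageQ P lam j r) (stageP P lam j (r + 1)) (boxesBefore lam j + r + 1)
      = stageQ P lam j (r + 1) := by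
  rw [addBox_eq_appendAt (addsBox_stageP hsh hr) (map_length_stageQ j r), appendAt_stageQ hsh hr]

include hsh hpos in
lemma colHeight_zero : colHeight lam 0 = P.length := by
  rw [colHeight, List.filter_eq_self.mpr fun x hx => by simpa using hpos x hx,
    length_lam hsh]

include hsh hpos in
lemma stageRows_colHeight (j : ℕ) : stageRows P j (colHeight lam j) = stageRows P (j + 1) 0 := by
  simp only [stageRows, Nat.succ_ne_zero, if_false]
  split_ifs with hj
  · rw [hj, colHeight_zero hsh hpos]
  · rfl

include hsh hsort hpos in
lemma stageP_colHeight (j : ℕ) :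
    stageP P lam j (colHeight lam j) = stageP P lam (j + 1) 0 := by
  rw [stageP, stageP, stageRows_colHeight hsh hpos]
  refine List.map_congr_left fun t _ => ?_
  simp only [stageRow, Nat.not_lt_zero, if_false, List.append_nil]
  by_cases ht : t < colHeight lam j
  · have hj := (lt_colHeight_iff hsh hsort j t).mp ht
    rw [if_pos ht, show colHeight lam j - (colHeight lam j - t) = t by omega, List.take_add_one,
      List.getElem?_eq_getElem hj, Option.toList_some, entryAt, List.getD_eq_getElem _ _ hj]
  · have hj : (P.getD t []).length ≤ j := not_lt.mp ((lt_colHeight_iff hsh hsort j t).not.mp ht)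
    rw [if_neg ht, List.append_nil, List.take_of_length_le hj, List.take_of_length_le (by omega)]

include hsh hsort hpos in
lemma stageQ_colHeight (j : ℕ) :
    stageQ P lam j (colHeight lam j) = stageQ P lam (j + 1) 0 := by
  rw [stageQ, stageQ, stageRows_colHeight hsh hpos]
  refine List.map_congr_left fun t _ => ?_
  simp only [Nat.not_lt_zero, if_false, List.append_nil]
  by_cases ht : t < colHeight lam j
  · have hj := (lt_colHeight_iff hsh hsort j t).mp ht
    rw [if_pos ht, Nat.min_eq_left hj.le, Nat.min_eq_left hj, List.range_succ, List.map_append,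
      List.map_singleton]
  · have hj : (P.getD t []).length ≤ j := not_lt.mp ((lt_colHeight_iff hsh hsort j t).not.mp ht)
    rw [if_neg ht, List.append_nil, Nat.min_eq_right hj, Nat.min_eq_right (by omega)]

include hsh hpos in
lemma getD_zero_pos (hP : P ≠ []) : 0 < lam.getD 0 0 := by
  obtain ⟨r, rs, rfl⟩ := List.exists_cons_of_ne_nil hP
  exact hpos _ (hsh ▸ by simp)

include hsh hsort hpos in
lemma stageP_getD_zero : stageP P lam (lam.getD 0 0) 0 = P := by
  rcases eq_or_ne P [] with rfl | hP
  · simp [stageP, stageRows]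
  rw [stageP, stageRows, if_neg (getD_zero_pos hsh hpos hP).ne']
  refine List.ext_getElem (by simp) fun t ht _ => ?_
  have hle : (P.getD t []).length ≤ lam.getD 0 0 :=
    length_getD_eq_lam_getD hsh 0 ▸ length_getD_antitone hsh hsort (Nat.zero_le t)
  simp only [List.getElem_map, List.getElem_range, stageRow, Nat.not_lt_zero, if_false,
    List.append_nil, List.take_of_length_le hle]
  exact List.getD_eq_getElem _ _ (by simpa using ht)

include hsh hsort hpos in
lemma stageQ_getD_zero : stageQ P lam (lam.getD 0 0) 0 = colStd lam := by
  rcases eq_or_ne P [] with rfl | hP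
  · obtain rfl : lam = [] := hsh.symm
    simp [stageQ, stageRows, colStd]
  rw [stageQ, stageRows, if_neg (getD_zero_pos hsh hpos hP).ne', colStd,
    length_lam hsh]
  refine List.map_congr_left fun t _ => ?_
  have hle : lam.getD t 0 ≤ lam.getD 0 0 := by
    simpa only [length_getD_eq_lam_getD hsh] using length_getD_antitone hsh hsort (Nat.zero_le t)
  simp only [Nat.not_lt_zero, if_false, List.append_nil, length_getD_eq_lam_getD hsh, boxesBefore,
    Nat.min_eq_right hle]

def columnWord (P : List (List ℕ)) (j : ℕ) : List ℕ :=
  (((List.range P.length).filter (fun i => decide (j < (P.getD i []).length))).reverse).map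
    (fun i => entryAt P i j)

lemma colReading_eq_flatten (P : List (List ℕ)) :
    colReading P = ((List.range ((P.getD 0 []).length)).map (columnWord P)).flatten := rfl

include hsh hsort in
lemma columnWord_eq (j : ℕ) :
    columnWord P j
      = (List.range (colHeight lam j)).map (fun t => entryAt P (colHeight lam j - 1 - t) j) := by
  have hcount : (List.range P.length).countP (fun i => decide (j < (P.getD i []).length))
      = colHeight lam j := by
    rw [countP_range_getD P [] (fun row => decide (j < row.length)), colHeight, ← hsh,
      ← List.countP_eq_length_filter, List.countP_map]
    rfl
  rw [columnWord, filter_range_eq_range_countP _ fun a b hab _ hb => by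
      simpa using (decide_eq_true_iff.mp hb).trans_le (length_getD_antitone hsh hsort hab),
    hcount, List.range_eq_range', List.reverse_range', List.map_map, ← List.range_eq_range']
  exact List.map_congr_left fun t _ => by simp

include hsh hsort hrows hcols in
lemma RSKword_take_columnWord (j : ℕ) {r : ℕ} (hr : r ≤ colHeight lam j) :
    RSKword ((columnWord P j).take r) (boxesBefore lam j + 1) (stageP P lam j 0, stageQ P lam j 0)
      = (stageP P lam j r, stageQ P lam j r) := by
  induction r with
  | zero => rfl
  | succ r ih =>
    have hlen : r < (columnWord P j).length := by simp [columnWord_eq hsh hsort]; omega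
    have hget : (columnWord P j)[r] = entryAt P (colHeight lam j - (r + 1)) j := by
      simp [columnWord_eq hsh hsort, Nat.sub_sub, Nat.add_comm 1 r]
    rw [List.take_add_one, List.getElem?_eq_getElem hlen, Option.toList_some, RSKword_append,
      ih (by omega), List.length_take_of_le hlen.le, hget, RSKword_cons,
      insertTab_stageP hsh hsort hrows hcols (by omega),
      show boxesBefore lam j + 1 + r = boxesBefore lam j + r + 1 by omega,
      addBox_stageQ hsh (by omega)]
    rfl

include hsh hsort hrows hcols hpos in
lemma RSKword_columnWords (j : ℕ) :
    RSKword ((List.range j).map (columnWord P)).flatten 1 ([], [])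
      = (stageP P lam j 0, stageQ P lam j 0) := by
  induction j with
  | zero => rfl
  | succ j ih =>
    have hlen : ((List.range j).map (columnWord P)).flatten.length = boxesBefore lam j := by
      simp [List.length_flatten, List.map_map, boxesBefore, Function.comp_def,
        columnWord_eq hsh hsort]
    have hword := RSKword_take_columnWord hsh hsort hrows hcols j le_rfl
    rw [List.take_of_length_le (by simp [columnWord_eq hsh hsort])] at hword
    rw [List.range_succ, List.map_append, List.flatten_append, RSKword_append, ih, hlen,
      List.map_singleton, List.flatten_singleton, Nat.add_comm, hword,
      stageP_colHeight hsh hsort hpos, stageQ_colHeight hsh hsort hpos]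

include hsh hsort hrows hcols hpos in
theorem RSKword_colReading : RSKword (colReading P) 1 ([], []) = (P, colStd lam) := by
  rw [colReading_eq_flatten, length_getD_eq_lam_getD hsh 0,
    RSKword_columnWords hsh hsort hrows hcols hpos,
    stageP_getD_zero hsh hsort hpos, stageQ_getD_zero hsh hsort hpos]

end ColumnInsertion

lemma oneLine_nodup (n : ℕ) (v : Perm (Fin n)) : (oneLine n v).Nodup :=
  (List.nodup_finRange n).map fun i j h => v.injective (Fin.ext (by simpa using h))

/-- The permutation whose RSK recording tableau is the column-superstandard tableau
`CSS(lam)` has one-line notation given by the column reading word (columns left to right,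
bottom to top) of its insertion tableau. -/
theorem rsk_column_superstandard (n : ℕ) (lam : List ℕ) (hlam : IsPartition n lam)
    (P : List (List ℕ)) (hP : IsSYT lam P) (v : Perm (Fin n))
    (hv : RSKmap n v = (P, colStd lam)) :
    oneLine n v = colReading P := by
  obtain ⟨hsort, hpos, -⟩ := hlam
  obtain ⟨hsh, hrows, hcols, hperm⟩ := hP
  have hread := RSKword_colReading hsh hsort hrows hcols hpos
  have hnodup : (colReading P).Nodup := by
    have h := RSKword_fst_flatten_perm (colReading P) 1 [] []
    rw [hread, List.flatten_nil, List.append_nil] at h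
    exact h.nodup_iff.mp (hperm.nodup_iff.mpr List.nodup_range')
  exact RSKword_inj (oneLine_nodup n v) hnodup (hv.trans hread.symm)

end KLPaper
end
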